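/- arXiv:math/0411452 — 6 statements merged into one kernel-verified Lean document; each statement's English description precedes it below -/
import Mathlib

section
/- For any two distinct adjacent vertices [α] and [β] of the symplectic graph Sp(2ν,q), the number of vertices adjacent to both [α] and [β] is exactly q^{2ν-2}(q-1). -/
open Matrix

/-- The standard nonsingular alternate matrix over `F` with `ν` diagonal blocks
`[[0,1],[-1,0]]`. -/
def sK (F : Type) [Field F] (ν : ℕ) : Matrix (Fin (2 * ν)) (Fin (2 * ν)) F :=
  Matrix.of fun i j =>
    if i.val % 2 = 0 ∧ j.val = i.val + 1 then (1 : F)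
    else if j.val % 2 = 0 ∧ i.val = j.val + 1 then (-1 : F) else 0

/-- The symplectic graph `Sp(2ν, q)`: vertices are the one-dimensional subspaces
of `F^(2ν)`, with `[α]` adjacent to `[β]` iff `α K βᵀ ≠ 0`. -/
def SpG (F : Type) [Field F] (ν : ℕ) :
    SimpleGraph (Projectivization F (Fin (2 * ν) → F)) :=
  SimpleGraph.fromRel fun x y => x.rep ⬝ᵥ ((sK F ν) *ᵥ y.rep) ≠ 0

/-! The form `ω(u, w) = u K wᵀ` is alternating, since `K` is antisymmetric with zero diagonal.
For adjacent `[a]`, `[b]` the linear map `v ↦ (ω(v, a), ω(v, b))` onto `F²` is therefore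
surjective (it sends `b` to `(ω(b, a), 0)` and `a` to `(0, ω(a, b))`), so every fibre is a coset
of a kernel of dimension `2ν - 2`. The common neighbours are the lines inside the preimage of
`(F^×)²`, which has `q^(2ν-2) (q-1)²` elements, and each line contains `q - 1` of them. -/

open scoped LinearAlgebra.Projectivization

theorem Matrix.isAlt_toBilin' {R n : Type*} [CommRing R] [Fintype n] [DecidableEq n]
    {K : Matrix n n R} (hK : Kᵀ = -K) (hdiag : ∀ i, K i i = 0) : (Matrix.toBilin' K).IsAlt := by
  intro v
  rw [toBilin'_apply, ← Fintype.sum_prod_type']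
  refine Finset.sum_involution (fun p _ ↦ p.swap) ?_ ?_ (by simp) (by simp)
  · rintro ⟨i, j⟩ -
    have hji : K j i = -K i j := by simpa using congrFun (congrFun hK i) j
    simp only [Prod.fst_swap, Prod.snd_swap, hji]
    ring
  · rintro ⟨i, j⟩ - hne hswap
    obtain rfl : j = i := congrArg Prod.fst hswap
    simp [hdiag] at hne

theorem AddMonoidHom.natCard_preimage_of_surjective {G H : Type*} [AddGroup G] [AddGroup H]
    (f : G →+ H) (hf : Function.Surjective f) (s : Set H) :
    Nat.card (f ⁻¹' s) = Nat.card f.ker * Nat.card s := by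
  let σ := Function.surjInv hf
  have hσ : ∀ h, f (σ h) = h := Function.surjInv_eq hf
  rw [← Nat.card_prod]
  exact Nat.card_congr
    { toFun := fun g ↦ (⟨g.1 - σ (f g.1), by simp [hσ]⟩, ⟨f g.1, g.2⟩)
      invFun := fun p ↦ ⟨p.1.1 + σ p.2.1, by simp [f.mem_ker.mp p.1.2, hσ]⟩
      left_inv := fun g ↦ by simp
      right_inv := fun p ↦ by ext <;> simp [f.mem_ker.mp p.1.2, hσ] }

theorem Projectivization.natCard_rep_mem_mul_natCard_units {k V : Type*} [DivisionRing k]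
    [AddCommGroup V] [Module k V] (s : Set V) (hs0 : 0 ∉ s)
    (hs : ∀ (c : kˣ) (v : V), v ∈ s → c • v ∈ s) :
    Nat.card {p : ℙ k V // p.rep ∈ s} * Nat.card kˣ = Nat.card s := by
  have hmk : ∀ (v : V) (hv : v ≠ 0), (mk k v hv).rep ∈ s ↔ v ∈ s := fun v hv ↦ by
    obtain ⟨c, hc⟩ := exists_smul_eq_mk_rep k v hv
    refine ⟨fun h ↦ ?_, fun h ↦ hc ▸ hs c v h⟩
    simpa [← hc] using hs c⁻¹ _ h
  rw [← Nat.card_prod]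
  symm
  exact Nat.card_congr <|
    (Equiv.subtypeSubtypeEquivSubtype (fun h ↦ ne_of_mem_of_not_mem h hs0)).symm.trans <|
    ((nonZeroEquivProjectivizationProdUnits k V).subtypeEquiv fun v ↦ (hmk v.1 v.2).symm).trans
    Equiv.prodSubtypeFstEquivSubtypeProd

namespace LinearMap.BilinForm.IsAlt

variable {k V : Type*} [Field k] [AddCommGroup V] [Module k V] {B : LinearMap.BilinForm k V}

theorem surjective_prod_flip (hB : B.IsAlt) {a b : V} (hab : B a b ≠ 0) :
    Function.Surjective ((B.flip a).prod (B.flip b)) := by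
  have hba : B b a ≠ 0 := hB.eq_iff.not.mp hab
  rintro ⟨c, d⟩
  refine ⟨(c / B b a) • b + (d / B a b) • a, ?_⟩
  ext <;> simp [hB a, hB b, hab, hba]

theorem ncard_setOf_rep_ne_zero_and_ne_zero [Finite k] [FiniteDimensional k V] (hB : B.IsAlt)
    {a b : V} (hab : B a b ≠ 0) :
    {p : ℙ k V | B p.rep a ≠ 0 ∧ B p.rep b ≠ 0}.ncard
      = Nat.card k ^ (Module.finrank k V - 2) * (Nat.card k - 1) := by
  set L := (B.flip a).prod (B.flip b)
  have hL := hB.surjective_prod_flip hab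
  set S : Set (k × k) := {x | x.1 ≠ 0 ∧ x.2 ≠ 0}
  have hS : Nat.card S = Nat.card kˣ ^ 2 := by
    rw [sq, Nat.card_congr unitsEquivNeZero, ← Nat.card_prod]
    exact Nat.card_congr (Equiv.subtypeProdEquivProd (p := (· ≠ (0 : k))) (q := (· ≠ (0 : k))))
  have hker : Nat.card (LinearMap.ker L) = Nat.card k ^ (Module.finrank k V - 2) := by
    have := L.finrank_range_add_finrank_ker
    rw [LinearMap.range_eq_top.mpr hL, finrank_top, Module.finrank_prod, Module.finrank_self] at this
    rw [Module.natCard_eq_pow_finrank (K := k)]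
    congr 1
    omega
  have hpre := L.toAddMonoidHom.natCard_preimage_of_surjective hL S
  rw [LinearMap.toAddMonoidHom_coe] at hpre
  have hcone := Projectivization.natCard_rep_mem_mul_natCard_units (k := k) (L ⁻¹' S)
    (by simp [S]) (fun c v hv ↦ by simpa [S, L, Units.smul_def] using hv)
  rw [hpre, show Nat.card L.toAddMonoidHom.ker = Nat.card (LinearMap.ker L) from rfl, hker,
    hS] at hcone
  rw [← Nat.card_units, ← Nat.card_coe_set_eq]
  refine Nat.eq_of_mul_eq_mul_right (Nat.card_pos (α := kˣ)) ?_
  rw [mul_assoc, ← sq]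
  exact hcone

end LinearMap.BilinForm.IsAlt

theorem sK_transpose (F : Type) [Field F] (ν : ℕ) : (sK F ν)ᵀ = -sK F ν := by
  ext i j
  rw [transpose_apply, neg_apply]
  simp only [sK, of_apply]
  split_ifs <;> first | simp | omega

theorem sK_apply_self (F : Type) [Field F] (ν : ℕ) (i : Fin (2 * ν)) : sK F ν i i = 0 := by
  simp only [sK, of_apply]
  split_ifs <;> first | rfl | omega

def symplecticForm (F : Type) [Field F] (ν : ℕ) : LinearMap.BilinForm F (Fin (2 * ν) → F) :=
  Matrix.toBilin' (sK F ν)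

theorem symplecticForm_apply (F : Type) [Field F] (ν : ℕ) (u w : Fin (2 * ν) → F) :
    symplecticForm F ν u w = u ⬝ᵥ sK F ν *ᵥ w :=
  toBilin'_apply' _ _ _

theorem isAlt_symplecticForm (F : Type) [Field F] (ν : ℕ) : (symplecticForm F ν).IsAlt :=
  Matrix.isAlt_toBilin' (sK_transpose F ν) (sK_apply_self F ν)

theorem SpG_adj_iff {F : Type} [Field F] {ν : ℕ} (x z : ℙ F (Fin (2 * ν) → F)) :
    (SpG F ν).Adj x z ↔ symplecticForm F ν z.rep x.rep ≠ 0 := by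
  have hB := isAlt_symplecticForm F ν
  simp only [SpG, SimpleGraph.fromRel_adj, ← symplecticForm_apply]
  refine ⟨fun ⟨_, h⟩ ↦ h.elim (hB.eq_iff.not.mp) id, fun h ↦ ⟨?_, .inr h⟩⟩
  rintro rfl
  exact h (hB _)

theorem common_neighbors_adj_SpG_general (q ν : ℕ) (F : Type) [Field F] [Fintype F]
    (hF : Fintype.card F = q)
    (x y : Projectivization F (Fin (2 * ν) → F)) (hxy : (SpG F ν).Adj x y) :
    ((SpG F ν).neighborSet x ∩ (SpG F ν).neighborSet y).ncard
      = q ^ (2 * ν - 2) * (q - 1) := by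
  have hB := isAlt_symplecticForm F ν
  have hxy' : symplecticForm F ν x.rep y.rep ≠ 0 := hB.eq_iff.not.mpr ((SpG_adj_iff x y).mp hxy)
  have hN : (SpG F ν).neighborSet x ∩ (SpG F ν).neighborSet y
      = {p | symplecticForm F ν p.rep x.rep ≠ 0 ∧ symplecticForm F ν p.rep y.rep ≠ 0} := by
    ext z
    simp [SpG_adj_iff]
  rw [hN, hB.ncard_setOf_rep_ne_zero_and_ne_zero hxy', Module.finrank_fin_fun,
    Nat.card_eq_fintype_card, hF]

theorem common_neighbors_adj_SpG (q ν : ℕ) (F : Type) [Field F] [Fintype F]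
    (hF : Fintype.card F = q) (hν : 1 ≤ ν)
    (x y : Projectivization F (Fin (2 * ν) → F)) (hxy : (SpG F ν).Adj x y) :
    ((SpG F ν).neighborSet x ∩ (SpG F ν).neighborSet y).ncard
      = q ^ (2 * ν - 2) * (q - 1) :=
  common_neighbors_adj_SpG_general q ν F hF x y hxy
end

section
/- The vertex set of the symplectic graph Sp(2ν,q) can be partitioned into q^ν + 1 pairwise disjoint subsets X_1, …, X_{q^ν+1} such that no edge of Sp(2ν,q) joins two vertices of the same subset, and moreover, for any two distinct indices i and j, every vertex in X_i is adjacent to exactly q^{ν-1} vertices in X_j. -/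
open Matrix

/-!
Let `E = 𝔽_{q^ν}`, viewed as a `ν`-dimensional space over `F = 𝔽_q`. Coordinates with respect to a
basis `e` of `E/F` on the first factor and its trace-dual basis on the second identify `F^(2ν)`
with `E × E` and turn `α K βᵀ` into `Tr(x₁y₂ - x₂y₁)`. The `q^ν + 1` lines `{(a, m a)}` (`m ∈ E`)
and `{(0, a)}` of the Desarguesian spread meet pairwise in `0`, cover `E × E`, and are totally
isotropic. For `v ≠ 0` on one of them, pairing with `v` is a nonzero `F`-linear functional on any
other, and the neighbours of `[v]` on that line are the points `[w]` with `w` normalised to pairing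
`1` with `v`: an affine hyperplane of `E`, with `q^(ν-1)` elements.
-/

open Module LinearMap


lemma Module.Dual.natCard_apply_eq_one {K V : Type*} [Field K] [Fintype K] [AddCommGroup V]
    [Module K V] [FiniteDimensional K V] {l : Module.Dual K V} (hl : l ≠ 0) :
    Nat.card {v // l v = 1} = Fintype.card K ^ (finrank K V - 1) := by
  have hfiber : Nat.card {v // l v = 1} = Nat.card (ker l) :=
    Nat.card_congr (AddMonoidHom.fiberEquivKerOfSurjective (f := l.toAddMonoidHom)
      (LinearMap.surjective hl) 1)
  rw [hfiber, Module.natCard_eq_pow_finrank (K := K), Nat.card_eq_fintype_card,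
    ← Module.Dual.finrank_ker_add_one_of_ne_zero hl, Nat.add_sub_cancel]

lemma Projectivization.ncard_setOf_rep_mem_range_and_ne_zero {K U V : Type*} [Field K]
    [AddCommGroup U] [Module K U] [AddCommGroup V] [Module K V] {L : U →ₗ[K] V}
    (hL : Function.Injective L) (φ : V →ₗ[K] K) :
    {x : Projectivization K V | x.rep ∈ range L ∧ φ x.rep ≠ 0}.ncard =
      Nat.card {u // φ (L u) = 1} := by
  have hne {u : U} (hu : φ (L u) = 1) : L u ≠ 0 := fun h => by simp [h] at hu
  let g (u : {u // φ (L u) = 1}) :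
      {x : Projectivization K V | x.rep ∈ range L ∧ φ x.rep ≠ 0} := by
    refine ⟨mk K (L u) (hne u.2), ?_⟩
    obtain ⟨c, hc⟩ := exists_smul_eq_mk_rep K (L u) (hne u.2)
    refine ⟨⟨(c : K) • u, by rw [← hc, map_smul, Units.smul_def]⟩, ?_⟩
    simp [← hc, Units.smul_def, u.2]
  have hg : Function.Bijective g := by
    constructor
    · rintro ⟨u, hu⟩ ⟨u', hu'⟩ h
      obtain ⟨c, hc⟩ := (mk_eq_mk_iff' K _ _ (hne hu) (hne hu')).1 (congrArg Subtype.val h)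
      rw [← map_smul] at hc
      have hc1 : c = 1 := by simpa [hu, hu'] using congrArg φ hc
      simpa [hc1] using (hL hc).symm
    · rintro ⟨x, ⟨b, hb⟩, hx⟩
      have hbx : φ (L b) ≠ 0 := hb ▸ hx
      refine ⟨⟨(φ (L b))⁻¹ • b, by simp [hbx]⟩, Subtype.ext ?_⟩
      refine ((mk_eq_mk_iff' K _ _ _ x.rep_nonzero).2 ⟨(φ (L b))⁻¹, ?_⟩).trans (mk_rep x)
      simp [hb]
  rw [← Nat.card_coe_set_eq, Nat.card_congr (Equiv.ofBijective g hg)]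

namespace SymplecticSpread

section SkewForm

variable {F E : Type*} [CommRing F] [CommRing E] [Algebra F E]

def skewForm (t : E →ₗ[F] F) : LinearMap.BilinForm F (E × E) :=
  ((mul F E).compl₁₂ (fst F E E) (snd F E E) -
    (mul F E).compl₁₂ (snd F E E) (fst F E E)).compr₂ t

@[simp]
lemma skewForm_apply (t : E →ₗ[F] F) (v w : E × E) :
    skewForm t v w = t (v.1 * w.2 - v.2 * w.1) := by
  simp [skewForm]

lemma skewForm_self (t : E →ₗ[F] F) (v : E × E) : skewForm t v v = 0 := by
  simp [mul_comm]

lemma skewForm_swap (t : E →ₗ[F] F) (v w : E × E) : skewForm t w v = -skewForm t v w := by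
  simp only [skewForm_apply, ← map_neg, neg_sub, mul_comm]

end SkewForm

section Spread

variable (F : Type*) {E : Type*} [Field F] [Field E] [Algebra F E]

def spreadLine : Option E → E →ₗ[F] E × E
  | none => (0 : E →ₗ[F] E).prod id
  | some m => id.prod (mul F E m)

variable {F}

@[simp] lemma spreadLine_none (a : E) : spreadLine F none a = (0, a) := rfl

@[simp] lemma spreadLine_some (m a : E) : spreadLine F (some m) a = (a, m * a) := rfl

lemma spreadLine_injective (o : Option E) : Function.Injective (spreadLine F o) := by
  cases o <;> intro a b h <;> simp_all [Prod.ext_iff]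

lemma exists_mem_range_spreadLine (v : E × E) : ∃ o, v ∈ range (spreadLine F o) := by
  rcases eq_or_ne v.1 0 with h | h
  · exact ⟨none, v.2, by simp [Prod.ext_iff, h]⟩
  · exact ⟨some (v.2 / v.1), v.1, by simp [h]⟩

lemma disjoint_range_spreadLine {o o' : Option E} (h : o ≠ o') :
    Disjoint (range (spreadLine F o)) (range (spreadLine F o')) := by
  rw [Submodule.disjoint_def]
  rintro _ ⟨a, rfl⟩ ⟨b, hb⟩
  suffices a = 0 by simp [this]
  cases o <;> cases o' <;> simp only [spreadLine_none, spreadLine_some, Prod.ext_iff] at hb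
  · exact absurd rfl h
  · rw [← hb.2, hb.1, mul_zero]
  · exact hb.1.symm
  · by_contra ha
    exact h (congrArg some (mul_right_cancel₀ ha (by rw [← hb.2, hb.1])).symm)

lemma skewForm_spreadLine_same (t : E →ₗ[F] F) (o : Option E) (a b : E) :
    skewForm t (spreadLine F o a) (spreadLine F o b) = 0 := by
  cases o <;> simp [mul_left_comm, mul_comm]

lemma exists_skewForm_spreadLine_eq {o o' : Option E} (h : o ≠ o') {a : E} (ha : a ≠ 0) :
    ∃ c ≠ 0, ∀ (t : E →ₗ[F] F) b,
      skewForm t (spreadLine F o a) (spreadLine F o' b) = t (c * b) := by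
  cases o <;> cases o'
  · exact absurd rfl h
  · exact ⟨-a, neg_ne_zero.2 ha, fun t b => by simp⟩
  · exact ⟨a, ha, fun t b => by simp⟩
  · refine ⟨(_ - _) * a, mul_ne_zero (sub_ne_zero.2 fun hm => h (congrArg some hm.symm)) ha,
      fun t b => by simp only [skewForm_apply, spreadLine_some]; ring_nf⟩

lemma skewForm_spreadLine_comp_ne_zero {t : E →ₗ[F] F} (ht : t ≠ 0) {o o' : Option E}
    (h : o ≠ o') {a : E} (ha : a ≠ 0) :
    (skewForm t (spreadLine F o a)).comp (spreadLine F o') ≠ 0 := by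
  obtain ⟨c, hc, hform⟩ := exists_skewForm_spreadLine_eq (F := F) h ha
  obtain ⟨b, hb⟩ : ∃ b, t b ≠ 0 := by simpa [LinearMap.ext_iff] using ht
  refine fun h0 => hb ?_
  simpa [hform, hc] using LinearMap.congr_fun h0 (c⁻¹ * b)

end Spread

section Coordinates

def interleaveEquiv (ν : ℕ) : Fin ν ⊕ Fin ν ≃ Fin (2 * ν) where
  toFun := Sum.elim (fun i => ⟨2 * i, by omega⟩) (fun i => ⟨2 * i + 1, by omega⟩)
  invFun k := if k.val % 2 = 0 then .inl ⟨k / 2, by omega⟩ else .inr ⟨k / 2, by omega⟩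
  left_inv s := by rcases s with i | i <;> simp [Fin.ext_iff]; omega
  right_inv k := by by_cases h : k.val % 2 = 0 <;> simp [h, Fin.ext_iff] <;> omega

variable {F : Type} [Field F] {ν : ℕ} {E : Type*} [CommRing E] [Algebra F E]

noncomputable def symplecticBasis (e f : Basis (Fin ν) F E) : Basis (Fin (2 * ν)) F (E × E) :=
  (e.prod f).reindex (interleaveEquiv ν)

lemma skewForm_symplecticBasis {t : E →ₗ[F] F} {e f : Basis (Fin ν) F E}
    (hef : ∀ i j, t (e i * f j) = if i = j then 1 else 0) (k l : Fin (2 * ν)) :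
    skewForm t (symplecticBasis e f k) (symplecticBasis e f l) = sK F ν k l := by
  obtain ⟨s, rfl⟩ := (interleaveEquiv ν).surjective k
  obtain ⟨s', rfl⟩ := (interleaveEquiv ν).surjective l
  rcases s with i | i <;> rcases s' with j | j <;>
    simp [symplecticBasis, sK, interleaveEquiv, hef, mul_comm (f _)]
  all_goals split_ifs <;> simp only [Fin.ext_iff, neg_zero] at * <;> omega

noncomputable def symplecticEquiv (e f : Basis (Fin ν) F E) : (Fin (2 * ν) → F) ≃ₗ[F] E × E :=
  (Pi.basisFun F _).equiv (symplecticBasis e f) (.refl _)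

variable {t : E →ₗ[F] F} {e f : Basis (Fin ν) F E}

lemma symplecticEquiv_single (k : Fin (2 * ν)) :
    symplecticEquiv e f (Pi.single k 1) = symplecticBasis e f k := by
  simpa [symplecticEquiv] using (Pi.basisFun F _).equiv_apply k (symplecticBasis e f) (.refl _)

lemma dotProduct_sK_mulVec (hef : ∀ i j, t (e i * f j) = if i = j then 1 else 0)
    (u v : Fin (2 * ν) → F) :
    u ⬝ᵥ sK F ν *ᵥ v = skewForm t (symplecticEquiv e f u) (symplecticEquiv e f v) := by
  have h : Matrix.toLinearMap₂' F (sK F ν) =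
      (skewForm t).compl₁₂ (symplecticEquiv e f).toLinearMap (symplecticEquiv e f).toLinearMap :=
    LinearMap.ext_basis (Pi.basisFun F _) (Pi.basisFun F _) fun k l => by
      simp [Matrix.toLinearMap₂'_apply', symplecticEquiv_single, skewForm_symplecticBasis hef]
  simpa [Matrix.toLinearMap₂'_apply'] using LinearMap.congr_fun₂ h u v

lemma SpG_adj_iff (hef : ∀ i j, t (e i * f j) = if i = j then 1 else 0)
    (x y : Projectivization F (Fin (2 * ν) → F)) :
    (SpG F ν).Adj x y ↔
      skewForm t (symplecticEquiv e f x.rep) (symplecticEquiv e f y.rep) ≠ 0 := by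
  simp only [SpG, SimpleGraph.fromRel_adj, dotProduct_sK_mulVec hef,
    skewForm_swap t _ (symplecticEquiv e f x.rep), neg_ne_zero, or_self, and_iff_right_iff_imp]
  rintro h rfl
  exact h (skewForm_self t _)

end Coordinates

section Parts

variable {F : Type} [Field F] {E : Type*} [Field E] [Algebra F E] {ν : ℕ}
  {t : E →ₗ[F] F} {e f : Basis (Fin ν) F E}

variable (e f) in
def spreadPart (o : Option E) : Set (Projectivization F (Fin (2 * ν) → F)) :=
  {x | symplecticEquiv e f x.rep ∈ range (spreadLine F o)}

lemma iUnion_spreadPart : ⋃ o, spreadPart e f o = Set.univ :=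
  Set.eq_univ_of_forall fun x =>
    Set.mem_iUnion.2 (exists_mem_range_spreadLine (symplecticEquiv e f x.rep))

lemma disjoint_spreadPart {o o' : Option E} (h : o ≠ o') :
    Disjoint (spreadPart e f o) (spreadPart e f o') :=
  Set.disjoint_left.2 fun x hx hx' => x.rep_nonzero <| (symplecticEquiv e f).map_eq_zero_iff.1 <|
    Submodule.disjoint_def.1 (disjoint_range_spreadLine h) _ hx hx'

lemma SpG_not_adj_of_mem_spreadPart (hef : ∀ i j, t (e i * f j) = if i = j then 1 else 0)
    {o : Option E} {x y : Projectivization F (Fin (2 * ν) → F)} (hx : x ∈ spreadPart e f o)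
    (hy : y ∈ spreadPart e f o) : ¬ (SpG F ν).Adj x y := by
  obtain ⟨a, ha⟩ := hx
  obtain ⟨b, hb⟩ := hy
  rw [SpG_adj_iff hef, ← ha, ← hb, skewForm_spreadLine_same, not_not]

lemma ncard_setOf_mem_spreadPart_and_adj [Fintype F]
    (hef : ∀ i j, t (e i * f j) = if i = j then 1 else 0) (ht : t ≠ 0) {o o' : Option E}
    (h : o ≠ o') {x : Projectivization F (Fin (2 * ν) → F)} (hx : x ∈ spreadPart e f o) :
    {y | y ∈ spreadPart e f o' ∧ (SpG F ν).Adj x y}.ncard = Fintype.card F ^ (ν - 1) := by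
  have : FiniteDimensional F E := e.finiteDimensional_of_finite
  obtain ⟨a, ha⟩ := hx
  have ha0 : a ≠ 0 := by
    rintro rfl
    exact x.rep_nonzero ((symplecticEquiv e f).map_eq_zero_iff.1 (by simpa using ha.symm))
  let L := (symplecticEquiv e f).symm.toLinearMap ∘ₗ spreadLine F o'
  let φ := skewForm t (symplecticEquiv e f x.rep) ∘ₗ (symplecticEquiv e f).toLinearMap
  have hset : {y | y ∈ spreadPart e f o' ∧ (SpG F ν).Adj x y} =
      {y | y.rep ∈ range L ∧ φ y.rep ≠ 0} := by
    ext y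
    simp [spreadPart, SpG_adj_iff hef, L, φ, LinearEquiv.symm_apply_eq]
  have hl := skewForm_spreadLine_comp_ne_zero ht h ha0
  rw [ha] at hl
  calc _ = Nat.card {u // φ (L u) = 1} := by
        rw [hset]
        exact Projectivization.ncard_setOf_rep_mem_range_and_ne_zero
          (L := L) ((symplecticEquiv e f).symm.injective.comp (spreadLine_injective o')) φ
    _ = Fintype.card F ^ (finrank F E - 1) := by
        simpa [L, φ] using Module.Dual.natCard_apply_eq_one hl
    _ = Fintype.card F ^ (ν - 1) := by rw [finrank_eq_card_basis e, Fintype.card_fin]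

end Parts

end SymplecticSpread

open SymplecticSpread in
theorem SpG_partite (q ν : ℕ) (F : Type) [Field F] [Fintype F]
    (hF : Fintype.card F = q) (hν : 1 ≤ ν) :
    ∃ X : Fin (q ^ ν + 1) → Set (Projectivization F (Fin (2 * ν) → F)),
      (⋃ i, X i) = Set.univ ∧
      (∀ i j, i ≠ j → Disjoint (X i) (X j)) ∧
      (∀ i, ∀ x ∈ X i, ∀ y ∈ X i, ¬ (SpG F ν).Adj x y) ∧
      (∀ i j, i ≠ j → ∀ x ∈ X i,
        {y | y ∈ X j ∧ (SpG F ν).Adj x y}.ncard = q ^ (ν - 1)) := by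
  subst hF
  obtain ⟨p, _⟩ := CharP.exists F
  have : Fact p.Prime := ⟨CharP.char_is_prime F p⟩
  have : NeZero ν := ⟨by omega⟩
  let E := FiniteField.Extension F p ν
  let e : Basis (Fin ν) F E :=
    (Module.finBasis F E).reindex (finCongr (FiniteField.finrank_extension F p ν))
  have hef := e.trace_mul_traceDual
  let κ : Fin (Fintype.card F ^ ν + 1) ≃ Option E :=
    (Finite.equivFinOfCardEq (by
      rw [Finite.card_option, FiniteField.natCard_extension, Nat.card_eq_fintype_card])).symm
  refine ⟨fun i => spreadPart e e.traceDual (κ i), ?_,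
    fun i j hij => disjoint_spreadPart (κ.injective.ne hij),
    fun i x hx y hy => SpG_not_adj_of_mem_spreadPart hef hx hy,
    fun i j hij x hx => ncard_setOf_mem_spreadPart_and_adj hef (Algebra.trace_ne_zero F E)
      (κ.injective.ne hij) hx⟩
  simpa only [← Set.iSup_eq_iUnion, κ.iSup_comp (g := spreadPart e e.traceDual)] using
    iUnion_spreadPart (e := e) (f := e.traceDual)
end

section
/- Every independent set of vertices of the symplectic graph Sp(2ν,q) (a set of vertices no two of which are adjacent) has at most (q^ν - 1)/(q - 1) elements. -/
/-!
The representatives of an independent set of `Sp(2ν, q)` are pairwise orthogonal for the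
alternating form `⟨x, y⟩ = x K yᵀ`, so their span `W` is totally isotropic: `W ≤ W^⊥`. Since `K`
is nonsingular, `dim W^⊥ = 2ν - dim W`, whence `dim W ≤ ν`. Every point of the independent set
is a point of the projective space `ℙ(W)`, which has `(q^dim W - 1)/(q - 1)` points.
-/

open Matrix

namespace LinearMap.BilinForm

variable {R M : Type*} [CommRing R] [AddCommGroup M] [Module R M]

theorem span_le_orthogonal_span {B : LinearMap.BilinForm R M} {s : Set M}
    (hs : ∀ x ∈ s, ∀ y ∈ s, B x y = 0) :
    Submodule.span R s ≤ B.orthogonal (Submodule.span R s) := by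
  refine Submodule.span_le.mpr fun y hy => mem_orthogonal_iff.mpr fun x hx => ?_
  have hker : Submodule.span R s ≤ LinearMap.ker (B.flip y) :=
    Submodule.span_le.mpr fun x hx => hs x hx y hy
  exact hker hx

variable {K V : Type*} [Field K] [AddCommGroup V] [Module K V] [FiniteDimensional K V]

theorem two_mul_finrank_le_of_le_orthogonal {B : LinearMap.BilinForm K V} (hB : B.Nondegenerate)
    {W : Submodule K V} (hW : W ≤ B.orthogonal W) :
    2 * Module.finrank K W ≤ Module.finrank K V := by
  have h₁ := Submodule.finrank_mono hW
  have h₂ := Submodule.finrank_le W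
  rw [finrank_orthogonal hB] at h₁
  omega

end LinearMap.BilinForm

namespace Projectivization

open scoped LinearAlgebra.Projectivization

variable {K V : Type*} [Field K] [AddCommGroup V] [Module K V]

theorem ncard_le_card_of_rep_mem [Finite V] {S : Set (ℙ K V)} {W : Submodule K V}
    (hS : ∀ x ∈ S, x.rep ∈ W) : S.ncard ≤ Nat.card (ℙ K W) := by
  have hsub : S ⊆ Set.range (map W.subtype W.injective_subtype) := fun x hx =>
    ⟨mk K ⟨x.rep, hS x hx⟩ (by simpa using x.rep_nonzero), by simp [map_mk]⟩
  calc S.ncard ≤ (Set.range (map W.subtype W.injective_subtype)).ncard :=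
        Set.ncard_le_ncard hsub (Set.finite_range _)
    _ = Nat.card (ℙ K W) := Set.ncard_range_of_injective (map_injective _ _)

theorem card_eq_of_finite [Finite K] [FiniteDimensional K V] :
    Nat.card (ℙ K V) = (Nat.card K ^ Module.finrank K V - 1) / (Nat.card K - 1) := by
  rw [card'', Module.natCard_eq_pow_finrank (K := K)]

end Projectivization

theorem Matrix.dotProduct_sub_transpose_mulVec_self {R n : Type*} [CommRing R] [Fintype n]
    (A : Matrix n n R) (x : n → R) : x ⬝ᵥ (A - Aᵀ) *ᵥ x = 0 := by
  rw [sub_mulVec, dotProduct_sub, dotProduct_transpose_mulVec, sub_self]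

section sK

variable {F : Type} [Field F] {ν : ℕ}

-- Skew-symmetry alone would not suffice in characteristic 2; splitting `K = A - Aᵀ` does.
theorem dotProduct_sK_mulVec_self (x : Fin (2 * ν) → F) : x ⬝ᵥ sK F ν *ᵥ x = 0 := by
  let A : Matrix (Fin (2 * ν)) (Fin (2 * ν)) F :=
    of fun i j => if i.val % 2 = 0 ∧ j.val = i.val + 1 then 1 else 0
  have hK : sK F ν = A - Aᵀ := by
    ext i j
    simp only [sK, A, of_apply, Matrix.sub_apply, transpose_apply]
    split_ifs <;> first | omega | simp
  rw [hK]
  exact dotProduct_sub_transpose_mulVec_self A x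

/-- The column of the unique nonzero entry in row `i` of `sK`. -/
def sKPartner (i : Fin (2 * ν)) : Fin (2 * ν) :=
  ⟨if i.val % 2 = 0 then i.val + 1 else i.val - 1, by split_ifs <;> omega⟩

theorem sK_apply_sKPartner (i j : Fin (2 * ν)) :
    sK F ν j (sKPartner i) = if j = i then (if i.val % 2 = 0 then 1 else -1) else 0 := by
  rcases i with ⟨i, hi⟩
  rcases j with ⟨j, hj⟩
  simp only [sK, sKPartner, of_apply, Fin.mk.injEq]
  split_ifs <;> first | omega | rfl

theorem sK_nondegenerate : (sK F ν).Nondegenerate := by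
  refine SeparatingLeft.nondegenerate
    (separatingLeft_iff_forall_vecMul_eq_zero.mpr fun v hv => funext fun i => ?_)
  have hi := congrFun hv (sKPartner i)
  simp only [vecMul, dotProduct, sK_apply_sKPartner, mul_ite, mul_one, mul_neg, mul_zero,
    Finset.sum_ite_eq', Finset.mem_univ, ↓reduceIte, Pi.zero_apply] at hi
  split_ifs at hi <;> simpa using hi

theorem dotProduct_rep_sK_mulVec_rep_eq_zero {x y : Projectivization F (Fin (2 * ν) → F)}
    (h : ¬ (SpG F ν).Adj x y) : x.rep ⬝ᵥ sK F ν *ᵥ y.rep = 0 := by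
  by_cases hxy : x = y
  · subst hxy
    exact dotProduct_sK_mulVec_self _
  · simp only [SpG, SimpleGraph.fromRel_adj] at h
    tauto

end sK

theorem SpG_independent_set_card_le_general (q ν : ℕ) (F : Type) [Field F] [Fintype F]
    (hF : Fintype.card F = q)
    (S : Set (Projectivization F (Fin (2 * ν) → F)))
    (hS : ∀ x ∈ S, ∀ y ∈ S, ¬ (SpG F ν).Adj x y) :
    S.ncard ≤ (q ^ ν - 1) / (q - 1) := by
  set W := Submodule.span F (Projectivization.rep '' S)
  have hW : W ≤ LinearMap.BilinForm.orthogonal (toLinearMap₂' F (sK F ν)) W := by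
    refine LinearMap.BilinForm.span_le_orthogonal_span ?_
    rintro _ ⟨x, hx, rfl⟩ _ ⟨y, hy, rfl⟩
    rw [toLinearMap₂'_apply']
    exact dotProduct_rep_sK_mulVec_rep_eq_zero (hS x hx y hy)
  have hdim : Module.finrank F W ≤ ν := by
    have := LinearMap.BilinForm.two_mul_finrank_le_of_le_orthogonal
      sK_nondegenerate.toLinearMap₂' hW
    rw [Module.finrank_fin_fun] at this
    omega
  have hq : 1 ≤ q := hF ▸ Fintype.card_pos
  calc S.ncard ≤ Nat.card (Projectivization F W) :=
        Projectivization.ncard_le_card_of_rep_mem fun x hx => Submodule.subset_span ⟨x, hx, rfl⟩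
    _ = (q ^ Module.finrank F W - 1) / (q - 1) := by
        rw [Projectivization.card_eq_of_finite, Nat.card_eq_fintype_card, hF]
    _ ≤ (q ^ ν - 1) / (q - 1) :=
        Nat.div_le_div_right (Nat.sub_le_sub_right (Nat.pow_le_pow_right hq hdim) 1)

theorem SpG_independent_set_card_le (q ν : ℕ) (F : Type) [Field F] [Fintype F]
    (hF : Fintype.card F = q) (hν : 1 ≤ ν)
    (S : Set (Projectivization F (Fin (2 * ν) → F)))
    (hS : ∀ x ∈ S, ∀ y ∈ S, ¬ (SpG F ν).Adj x y) :
    S.ncard ≤ (q ^ ν - 1) / (q - 1) :=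
  SpG_independent_set_card_le_general q ν F hF S hS
end

section
/- The symplectic graph Sp(2ν,q) is edge transitive: for any vertices [α₁], [α₂], [β₁], [β₂] with [α₁] adjacent to [α₂] and [β₁] adjacent to [β₂], there exists a graph automorphism σ of Sp(2ν,q) with σ([α₁]) = [β₁] and σ([α₂]) = [β₂]. -/
open Matrix

namespace SpGAux
variable {F : Type} [Field F] {ν : ℕ}

def Bf (u v : Fin (2*ν) → F) : F := u ⬝ᵥ (sK F ν *ᵥ v)

lemma sK_diag (i : Fin (2*ν)) : sK F ν i i = 0 := by
  simp only [sK, of_apply]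
  rw [if_neg, if_neg] <;> omega

lemma sK_skew (i j : Fin (2*ν)) : sK F ν j i = - sK F ν i j := by
  simp only [sK, of_apply]
  by_cases hA : (i:ℕ) % 2 = 0 ∧ (j:ℕ) = (i:ℕ) + 1 <;>
    by_cases hB : (j:ℕ) % 2 = 0 ∧ (i:ℕ) = (j:ℕ) + 1
  · omega
  · rw [if_neg hB, if_pos hA, if_pos hA]
  · rw [if_pos hB, if_neg hA, if_pos hB]; ring
  · rw [if_neg hB, if_neg hA, if_neg hA, if_neg hB]; ring

lemma Bf_add_left (u u' v : Fin (2*ν) → F) : Bf (u + u') v = Bf u v + Bf u' v := by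
  simp [Bf, add_dotProduct]

lemma Bf_smul_left (c : F) (u v : Fin (2*ν) → F) : Bf (c • u) v = c * Bf u v := by
  simp [Bf, smul_dotProduct]

lemma Bf_add_right (u v v' : Fin (2*ν) → F) : Bf u (v + v') = Bf u v + Bf u v' := by
  simp [Bf, mulVec_add, dotProduct_add]

lemma Bf_smul_right (c : F) (u v : Fin (2*ν) → F) : Bf u (c • v) = c * Bf u v := by
  simp [Bf, mulVec_smul, dotProduct_smul, smul_eq_mul]

lemma Bf_self (u : Fin (2*ν) → F) : Bf u u = 0 := by
  have : Bf u u = ∑ p : Fin (2*ν) × Fin (2*ν), u p.1 * (sK F ν p.1 p.2 * u p.2) := by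
    simp [Bf, dotProduct, mulVec, Finset.mul_sum, ← Finset.sum_product',
      Finset.sum_product]
  rw [this]
  refine Finset.sum_involution (fun p _ => p.swap) ?_ ?_ (fun _ _ => Finset.mem_univ _) ?_
  · intro p _
    simp only [Prod.fst_swap, Prod.snd_swap]
    rw [sK_skew]
    ring
  · intro p _ hf hswap
    apply hf
    have h1 : p.1 = p.2 := congrArg Prod.snd hswap
    rw [h1, sK_diag]; ring
  · intro p _; rfl

lemma Bf_skew (u v : Fin (2*ν) → F) : Bf u v = - Bf v u := by
  have h := Bf_self (u + v)
  rw [Bf_add_left, Bf_add_right, Bf_add_right, Bf_self, Bf_self] at h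
  linear_combination h

lemma Bf_zero_left (v : Fin (2*ν) → F) : Bf 0 v = 0 := by simp [Bf]

lemma Bf_sub_right (u v v' : Fin (2*ν) → F) : Bf u (v - v') = Bf u v - Bf u v' := by
  have := Bf_add_right u (v - v') v'
  simp at this
  linear_combination -this

lemma Bf_single (u : Fin (2*ν) → F) (i' : Fin (2*ν)) :
    Bf u (Pi.single i' 1) = ∑ j, u j * sK F ν j i' := by
  simp [Bf, mulVec_single, dotProduct]

lemma Bf_nondeg (u : Fin (2*ν) → F) (hu : u ≠ 0) : ∃ v, Bf u v ≠ 0 := by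
  obtain ⟨i, hi⟩ := Function.ne_iff.mp hu
  simp only [Pi.zero_apply] at hi
  have hilt : (i : ℕ) < 2 * ν := i.isLt
  by_cases h : (i : ℕ) % 2 = 0
  · refine ⟨Pi.single (⟨(i : ℕ) + 1, by omega⟩ : Fin (2*ν)) 1, ?_⟩
    rw [Bf_single, Finset.sum_eq_single i]
    · have : sK F ν i ⟨(i : ℕ) + 1, by omega⟩ = 1 := by
        simp only [sK, of_apply]
        rw [if_pos ⟨h, trivial⟩]
      rw [this, mul_one]; exact hi
    · intro b _ hb
      have hbv : (b : ℕ) ≠ (i : ℕ) := fun hc => hb (Fin.ext hc)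
      have : sK F ν b ⟨(i : ℕ) + 1, by omega⟩ = 0 := by
        simp only [sK, of_apply]
        rw [if_neg (by omega), if_neg (by omega)]
      rw [this, mul_zero]
    · intro hmem; exact absurd (Finset.mem_univ i) hmem
  · refine ⟨Pi.single (⟨(i : ℕ) - 1, by omega⟩ : Fin (2*ν)) 1, ?_⟩
    rw [Bf_single, Finset.sum_eq_single i]
    · have : sK F ν i ⟨(i : ℕ) - 1, by omega⟩ = -1 := by
        simp only [sK, of_apply]
        rw [if_neg (by omega), if_pos (by constructor <;> omega)]
      rw [this]
      simpa using hi
    · intro b _ hb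
      have hbv : (b : ℕ) ≠ (i : ℕ) := fun hc => hb (Fin.ext hc)
      have : sK F ν b ⟨(i : ℕ) - 1, by omega⟩ = 0 := by
        simp only [sK, of_apply]
        rw [if_neg (by omega), if_neg (by omega)]
      rw [this, mul_zero]
    · intro hmem; exact absurd (Finset.mem_univ i) hmem

lemma Bf_zero_right (u : Fin (2*ν) → F) : Bf u 0 = 0 := by simp [Bf]

/-- Symplectic transvection `x ↦ x + (c * B(x,w)) • w`. -/
def tv (w : Fin (2*ν) → F) (c : F) : (Fin (2*ν) → F) ≃ₗ[F] (Fin (2*ν) → F) where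
  toFun x := x + (c * Bf x w) • w
  invFun x := x + (-(c * Bf x w)) • w
  map_add' x y := by
    show (x + y) + (c * Bf (x + y) w) • w = (x + (c * Bf x w) • w) + (y + (c * Bf y w) • w)
    rw [Bf_add_left]; module
  map_smul' a x := by
    show (a • x) + (c * Bf (a • x) w) • w = a • (x + (c * Bf x w) • w)
    rw [Bf_smul_left]; module
  left_inv x := by
    simp only
    have hB : Bf (x + (c * Bf x w) • w) w = Bf x w := by
      rw [Bf_add_left, Bf_smul_left, Bf_self]; ring
    rw [hB]; module
  right_inv x := by
    simp only
    have hB : Bf (x + (-(c * Bf x w)) • w) w = Bf x w := by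
      rw [Bf_add_left, Bf_smul_left, Bf_self]; ring
    rw [hB]; module

lemma tv_apply (w : Fin (2*ν) → F) (c : F) (x : Fin (2*ν) → F) :
    tv w c x = x + (c * Bf x w) • w := rfl

lemma tv_B (w : Fin (2*ν) → F) (c : F) (x y : Fin (2*ν) → F) :
    Bf (tv w c x) (tv w c y) = Bf x y := by
  rw [tv_apply, tv_apply]
  simp only [Bf_add_left, Bf_add_right, Bf_smul_left, Bf_smul_right, Bf_self]
  rw [Bf_skew w y]
  ring

lemma tv_move {a b : Fin (2*ν) → F} (h : Bf a b ≠ 0) :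
    ∃ g : (Fin (2*ν) → F) ≃ₗ[F] (Fin (2*ν) → F),
      (∀ x y, Bf (g x) (g y) = Bf x y) ∧ g a = b ∧
      ∀ p, Bf p (b - a) = 0 → g p = p := by
  refine ⟨tv (b - a) (Bf a b)⁻¹, fun x y => tv_B _ _ x y, ?_, ?_⟩
  · rw [tv_apply]
    have hB : Bf a (b - a) = Bf a b := by rw [Bf_sub_right, Bf_self, sub_zero]
    rw [hB, inv_mul_cancel₀ h, one_smul]
    abel
  · intro p hp
    rw [tv_apply, hp, mul_zero, zero_smul, add_zero]

lemma move_any {u v : Fin (2*ν) → F} (hu : u ≠ 0) (hv : v ≠ 0) :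
    ∃ g : (Fin (2*ν) → F) ≃ₗ[F] (Fin (2*ν) → F),
      (∀ x y, Bf (g x) (g y) = Bf x y) ∧ g u = v := by
  by_cases huv : u = v
  · exact ⟨LinearEquiv.refl F _, fun x y => rfl, by simp [huv]⟩
  by_cases hB : Bf u v ≠ 0
  · obtain ⟨g, hg, hga, -⟩ := tv_move hB
    exact ⟨g, hg, hga⟩
  push_neg at hB
  obtain ⟨z1, hz1⟩ := Bf_nondeg u hu
  obtain ⟨z2, hz2⟩ := Bf_nondeg v hv
  have hskew : ∀ w z : Fin (2*ν) → F, Bf w z ≠ 0 → Bf z w ≠ 0 := by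
    intro w z h
    rw [Bf_skew]
    simpa using h
  obtain ⟨z, hzu, hzv⟩ : ∃ z, Bf u z ≠ 0 ∧ Bf z v ≠ 0 := by
    by_cases h1 : Bf z1 v ≠ 0
    · exact ⟨z1, hz1, h1⟩
    by_cases h2 : Bf u z2 ≠ 0
    · exact ⟨z2, h2, hskew _ _ hz2⟩
    push_neg at h1 h2
    refine ⟨z1 + z2, ?_, ?_⟩
    · rw [Bf_add_right, h2, add_zero]; exact hz1
    · rw [Bf_add_left, h1, zero_add]; exact hskew _ _ hz2
  obtain ⟨g1, hg1, hg1u, -⟩ := tv_move hzu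
  obtain ⟨g2, hg2, hg2z, -⟩ := tv_move hzv
  refine ⟨g1.trans g2, fun x y => ?_, ?_⟩
  · rw [LinearEquiv.trans_apply, LinearEquiv.trans_apply, hg2, hg1]
  · rw [LinearEquiv.trans_apply, hg1u, hg2z]

lemma fix_move (p a b : Fin (2*ν) → F) (hpa : Bf p a = Bf p b) (hpb : Bf p b ≠ 0) :
    ∃ g : (Fin (2*ν) → F) ≃ₗ[F] (Fin (2*ν) → F),
      (∀ x y, Bf (g x) (g y) = Bf x y) ∧ g p = p ∧ g a = b := by
  by_cases hab : a = b
  · exact ⟨LinearEquiv.refl F _, fun x y => rfl, rfl, by simp [hab]⟩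
  by_cases h1 : Bf a b ≠ 0
  · obtain ⟨g, hg, hga, hfix⟩ := tv_move h1
    refine ⟨g, hg, hfix p ?_, hga⟩
    rw [Bf_sub_right, ← hpa, sub_self]
  push_neg at h1
  have haz : Bf a (p + b) ≠ 0 := by
    rw [Bf_add_right, h1, add_zero, Bf_skew, hpa]
    simpa using hpb
  have hzb : Bf (p + b) b ≠ 0 := by
    rw [Bf_add_left, Bf_self, add_zero]
    exact hpb
  obtain ⟨g1, hg1, hg1a, hfix1⟩ := tv_move haz
  obtain ⟨g2, hg2, hg2z, hfix2⟩ := tv_move hzb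
  refine ⟨g1.trans g2, fun x y => ?_, ?_, ?_⟩
  · rw [LinearEquiv.trans_apply, LinearEquiv.trans_apply, hg2, hg1]
  · rw [LinearEquiv.trans_apply, hfix1 p ?_, hfix2 p ?_]
    · rw [show b - (p + b) = (0:Fin (2*ν) → F) - p by abel, Bf_sub_right, Bf_zero_right,
        Bf_self, sub_self]
    · rw [show p + b - a = (p - a) + b by abel, Bf_add_right, Bf_sub_right, Bf_self,
        zero_sub, hpa]
      ring
  · rw [LinearEquiv.trans_apply, hg1a, hg2z]

lemma exists_symp {u1 u2 v1 v2 : Fin (2*ν) → F} (h1 : Bf u1 u2 ≠ 0) (h2 : Bf v1 v2 ≠ 0) :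
    ∃ (g : (Fin (2*ν) → F) ≃ₗ[F] (Fin (2*ν) → F)) (c : F), c ≠ 0 ∧
      (∀ x y, Bf (g x) (g y) = Bf x y) ∧ g u1 = v1 ∧ g u2 = c • v2 := by
  have hu1 : u1 ≠ 0 := fun h => h1 (h ▸ Bf_zero_left u2)
  have hv1 : v1 ≠ 0 := fun h => h2 (h ▸ Bf_zero_left v2)
  obtain ⟨S, hS, hSu⟩ := move_any hu1 hv1
  set c : F := Bf u1 u2 / Bf v1 v2 with hc
  have hcne : c ≠ 0 := div_ne_zero h1 h2
  have hb : Bf v1 (c • v2) = Bf u1 u2 := by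
    rw [Bf_smul_right, hc, div_mul_cancel₀ _ h2]
  have hpa : Bf v1 (S u2) = Bf v1 (c • v2) := by
    rw [hb, ← hSu, hS]
  have hpb : Bf v1 (c • v2) ≠ 0 := by rw [hb]; exact h1
  obtain ⟨R, hR, hRp, hRa⟩ := fix_move v1 (S u2) (c • v2) hpa hpb
  refine ⟨S.trans R, c, hcne, fun x y => ?_, ?_, ?_⟩
  · rw [LinearEquiv.trans_apply, LinearEquiv.trans_apply, hR, hS]
  · rw [LinearEquiv.trans_apply, hSu, hRp]
  · rw [LinearEquiv.trans_apply, hRa]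

lemma adj_iff (x y : Projectivization F (Fin (2*ν) → F)) :
    (SpG F ν).Adj x y ↔ Bf x.rep y.rep ≠ 0 := by
  show (SimpleGraph.fromRel fun x y : Projectivization F (Fin (2*ν) → F) =>
      Bf x.rep y.rep ≠ 0).Adj x y ↔ _
  rw [SimpleGraph.fromRel_adj]
  constructor
  · rintro ⟨hne, h | h⟩
    · exact h
    · rw [Bf_skew]
      simpa using h
  · intro h
    refine ⟨?_, Or.inl h⟩
    rintro rfl
    exact h (Bf_self _)

/-- The projective map induced by a linear equivalence. -/
def pmap (g : (Fin (2*ν) → F) ≃ₗ[F] (Fin (2*ν) → F)) :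
    Projectivization F (Fin (2*ν) → F) ≃ Projectivization F (Fin (2*ν) → F) where
  toFun := Projectivization.map (g : (Fin (2*ν) → F) →ₗ[F] (Fin (2*ν) → F)) g.injective
  invFun := Projectivization.map (g.symm : (Fin (2*ν) → F) →ₗ[F] (Fin (2*ν) → F))
    g.symm.injective
  left_inv x := by
    induction' x using Projectivization.ind with v hv
    rw [Projectivization.map_mk, Projectivization.map_mk]
    simp
  right_inv x := by
    induction' x using Projectivization.ind with v hv
    rw [Projectivization.map_mk, Projectivization.map_mk]
    simp

lemma pmap_mk (g : (Fin (2*ν) → F) ≃ₗ[F] (Fin (2*ν) → F)) (v : Fin (2*ν) → F) (hv : v ≠ 0) :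
    pmap g (Projectivization.mk F v hv) =
      Projectivization.mk F (g v) (by simp [hv]) := rfl

lemma pmap_rep (g : (Fin (2*ν) → F) ≃ₗ[F] (Fin (2*ν) → F))
    (x : Projectivization F (Fin (2*ν) → F)) :
    ∃ a : Fˣ, (a : F) • g x.rep = (pmap g x).rep := by
  have h1 : pmap g x = Projectivization.mk F (g x.rep) (by simp [x.rep_nonzero]) := by
    conv_lhs => rw [← x.mk_rep]
    exact pmap_mk g x.rep x.rep_nonzero
  rw [h1]
  exact Projectivization.exists_smul_eq_mk_rep F _ _

lemma pmap_adj (g : (Fin (2*ν) → F) ≃ₗ[F] (Fin (2*ν) → F))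
    (hg : ∀ x y, Bf (g x) (g y) = Bf x y) (x y : Projectivization F (Fin (2*ν) → F)) :
    (SpG F ν).Adj (pmap g x) (pmap g y) ↔ (SpG F ν).Adj x y := by
  rw [adj_iff, adj_iff]
  obtain ⟨a, ha⟩ := pmap_rep g x
  obtain ⟨b, hb⟩ := pmap_rep g y
  rw [← ha, ← hb, Bf_smul_left, Bf_smul_right, hg]
  simp [mul_ne_zero_iff]

end SpGAux

theorem SpG_edge_transitive (q ν : ℕ) (F : Type) [Field F] [Fintype F]
    (hF : Fintype.card F = q) (hν : 1 ≤ ν)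
    (x₁ x₂ y₁ y₂ : Projectivization F (Fin (2 * ν) → F))
    (hx : (SpG F ν).Adj x₁ x₂) (hy : (SpG F ν).Adj y₁ y₂) :
    ∃ g : SpG F ν ≃g SpG F ν, g x₁ = y₁ ∧ g x₂ = y₂ := by
  rw [SpGAux.adj_iff] at hx hy
  obtain ⟨g, c, hc, hg, hg1, hg2⟩ := SpGAux.exists_symp hx hy
  refine ⟨⟨SpGAux.pmap g, fun {a b} => SpGAux.pmap_adj g hg a b⟩, ?_, ?_⟩
  · show SpGAux.pmap g x₁ = y₁
    conv_lhs => rw [← x₁.mk_rep]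
    rw [SpGAux.pmap_mk g x₁.rep x₁.rep_nonzero]
    simp only [hg1]
    exact y₁.mk_rep
  · show SpGAux.pmap g x₂ = y₂
    conv_lhs => rw [← x₂.mk_rep]
    rw [SpGAux.pmap_mk g x₂.rep x₂.rep_nonzero]
    simp only [hg2]
    conv_rhs => rw [← y₂.mk_rep]
    rw [Projectivization.mk_eq_mk_iff]
    exact ⟨Units.mk0 c hc, rfl⟩
end

section
/- Every graph automorphism τ of Sp(2ν,2) is induced by a linear map: there exists a 2ν×2ν matrix T over F_2 with T K Tᵀ = K such that τ([α]) = [αT] for every nonzero α ∈ F_2^{(2ν)}. -/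
open Matrix

namespace AutSpAux

variable (ν : ℕ)

/-- partner index -/
def pp (i : Fin (2 * ν)) : Fin (2 * ν) :=
  ⟨if i.val % 2 = 0 then i.val + 1 else i.val - 1, by
    rcases i with ⟨i, hi⟩; dsimp only; split <;> omega⟩

lemma pp_pp (i : Fin (2 * ν)) : pp ν (pp ν i) = i := by
  rcases i with ⟨i, hi⟩
  simp only [pp]
  apply Fin.ext
  dsimp only
  split <;> split <;> omega

lemma pp_ne (i : Fin (2 * ν)) : pp ν i ≠ i := by
  rcases i with ⟨i, hi⟩
  simp only [pp, ne_eq, Fin.mk.injEq]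
  split <;> omega

lemma sK_apply (i j : Fin (2 * ν)) :
    sK (ZMod 2) ν i j = if j = pp ν i then 1 else 0 := by
  rcases i with ⟨i, hi⟩
  rcases j with ⟨j, hj⟩
  simp only [sK, Matrix.of_apply, pp, Fin.mk.injEq]
  split_ifs <;> first | rfl | decide | (exfalso; omega)

end AutSpAux

namespace AutSpAux

variable (ν : ℕ)

abbrev V := Fin (2 * ν) → ZMod 2

/-- the symplectic form -/
def bB (v w : V ν) : ZMod 2 := v ⬝ᵥ (sK (ZMod 2) ν *ᵥ w)

lemma sK_mulVec (v : V ν) (i : Fin (2 * ν)) :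
    (sK (ZMod 2) ν *ᵥ v) i = v (pp ν i) := by
  simp [Matrix.mulVec, dotProduct, sK_apply, ite_mul]

lemma bB_eq (v w : V ν) : bB ν v w = ∑ i, v i * w (pp ν i) := by
  simp [bB, dotProduct, sK_mulVec]

def ppEquiv : Fin (2 * ν) ≃ Fin (2 * ν) :=
  ⟨pp ν, pp ν, pp_pp ν, pp_pp ν⟩

lemma bB_symm (v w : V ν) : bB ν v w = bB ν w v := by
  rw [bB_eq, bB_eq]
  rw [← Equiv.sum_comp (ppEquiv ν) (fun i => w i * v (pp ν i))]
  refine Finset.sum_congr rfl fun i _ => ?_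
  simp [ppEquiv, pp_pp, mul_comm]

lemma bB_self (v : V ν) : bB ν v v = 0 := by
  rw [bB_eq]
  refine Finset.sum_ninvolution (pp ν) (fun i => ?_) (fun i _ => pp_ne ν i)
    (fun i => Finset.mem_univ _) (pp_pp ν)
  rw [pp_pp, mul_comm]
  exact CharTwo.add_self_eq_zero _

lemma bB_single_right (v : V ν) (i : Fin (2 * ν)) :
    bB ν v (Pi.single (pp ν i) 1) = v i := by
  rw [bB_eq]
  have h : ∀ k : Fin (2 * ν), (Pi.single (pp ν i) 1 : V ν) (pp ν k)
      = if k = i then 1 else 0 := by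
    intro k
    rw [Pi.single_apply]
    congr 1
    simp only [eq_iff_iff]
    constructor
    · intro h; rw [← pp_pp ν k, h, pp_pp]
    · intro h; rw [h]
  simp [h]

lemma bB_left_cancel {v w : V ν} (h : ∀ u : V ν, u ≠ 0 → bB ν v u = bB ν w u) : v = w := by
  funext i
  have hu : (Pi.single (pp ν i) 1 : V ν) ≠ 0 := by
    intro h0
    have := congrFun h0 (pp ν i)
    simp at this
  have := h _ hu
  rwa [bB_single_right, bB_single_right] at this

lemma bB_add_left (v w u : V ν) : bB ν (v + w) u = bB ν v u + bB ν w u := by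
  simp [bB, add_dotProduct]

lemma bB_single_single (i j : Fin (2 * ν)) :
    bB ν (Pi.single i 1) (Pi.single j 1) = sK (ZMod 2) ν i j := by
  rw [bB_eq, sK_apply]
  have : ∀ k, (Pi.single i 1 : V ν) k * (Pi.single j 1 : V ν) (pp ν k)
      = if k = i then (Pi.single j 1 : V ν) (pp ν k) else 0 := by
    intro k
    rw [Pi.single_apply, ite_mul, one_mul, zero_mul]
  rw [Finset.sum_congr rfl fun k _ => this k, Finset.sum_ite_eq' Finset.univ i]
  simp only [Finset.mem_univ, if_true, Pi.single_apply]
  congr 1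
  exact propext eq_comm

end AutSpAux

namespace AutSpAux

variable (ν : ℕ)

lemma rep_mk {v : V ν} (hv : v ≠ 0) :
    (Projectivization.mk (ZMod 2) v hv).rep = v := by
  have h := Projectivization.mk_rep (Projectivization.mk (ZMod 2) v hv)
  rw [Projectivization.mk_eq_mk_iff] at h
  obtain ⟨a, ha⟩ := h
  have hu : ∀ u : (ZMod 2)ˣ, (u : ZMod 2) = 1 := by decide
  rw [Units.smul_def, hu, one_smul] at ha
  exact ha.symm

lemma mk_inj {v w : V ν} (hv : v ≠ 0) (hw : w ≠ 0)
    (h : Projectivization.mk (ZMod 2) v hv = Projectivization.mk (ZMod 2) w hw) : v = w := by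
  have := congrArg Projectivization.rep h
  rwa [rep_mk, rep_mk] at this

lemma adj_iff {v w : V ν} (hv : v ≠ 0) (hw : w ≠ 0) :
    (SpG (ZMod 2) ν).Adj (Projectivization.mk (ZMod 2) v hv) (Projectivization.mk (ZMod 2) w hw)
      ↔ bB ν v w ≠ 0 := by
  rw [SpG, SimpleGraph.fromRel_adj]
  rw [rep_mk, rep_mk]
  constructor
  · rintro ⟨hne, h | h⟩
    · exact h
    · rw [bB_symm]; exact h
  · intro h
    refine ⟨fun he => ?_, Or.inl h⟩
    have hvw : v = w := mk_inj ν hv hw he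
    apply h
    rw [hvw]
    exact bB_self ν w

variable (τ : SpG (ZMod 2) ν ≃g SpG (ZMod 2) ν)

noncomputable def ft (v : V ν) : V ν :=
  if h : v = 0 then 0 else (τ (Projectivization.mk (ZMod 2) v h)).rep

lemma ft_spec {v : V ν} (hv : v ≠ 0) :
    ft ν τ v = (τ (Projectivization.mk (ZMod 2) v hv)).rep := by
  simp [ft, hv]

lemma ft_ne {v : V ν} (hv : v ≠ 0) : ft ν τ v ≠ 0 := by
  rw [ft_spec ν τ hv]
  exact Projectivization.rep_nonzero _

lemma mk_ft {v : V ν} (hv : v ≠ 0) :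
    Projectivization.mk (ZMod 2) (ft ν τ v) (ft_ne ν τ hv)
      = τ (Projectivization.mk (ZMod 2) v hv) := by
  have : Projectivization.mk (ZMod 2) (ft ν τ v) (ft_ne ν τ hv)
      = Projectivization.mk (ZMod 2) ((τ (Projectivization.mk (ZMod 2) v hv)).rep)
        (Projectivization.rep_nonzero _) := by
    congr 1
    exact ft_spec ν τ hv
  rw [this, Projectivization.mk_rep]

lemma ft_inj {v w : V ν} (hv : v ≠ 0) (hw : w ≠ 0) (h : ft ν τ v = ft ν τ w) : v = w := by
  apply mk_inj ν hv hw
  apply τ.injective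
  rw [← mk_ft ν τ hv, ← mk_ft ν τ hw]
  exact (Projectivization.mk_eq_mk_iff _ _ _ _ _).2 ⟨1, by rw [one_smul, h]⟩

lemma ft_surj {w : V ν} (hw : w ≠ 0) : ∃ v, v ≠ 0 ∧ ft ν τ v = w := by
  refine ⟨(τ.symm (Projectivization.mk (ZMod 2) w hw)).rep,
    Projectivization.rep_nonzero _, ?_⟩
  rw [ft_spec ν τ (Projectivization.rep_nonzero _), Projectivization.mk_rep]
  rw [RelIso.apply_symm_apply]
  exact rep_mk ν hw

lemma bB_pres {v w : V ν} (hv : v ≠ 0) (hw : w ≠ 0) :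
    bB ν (ft ν τ v) (ft ν τ w) = bB ν v w := by
  by_cases hvw : v = w
  · subst hvw; rw [bB_self, bB_self]
  · have hiff : bB ν (ft ν τ v) (ft ν τ w) ≠ 0 ↔ bB ν v w ≠ 0 := by
      rw [← adj_iff ν (ft_ne ν τ hv) (ft_ne ν τ hw), ← adj_iff ν hv hw,
        mk_ft ν τ hv, mk_ft ν τ hw]
      exact τ.map_adj_iff
    have : ∀ a b : ZMod 2, (a ≠ 0 ↔ b ≠ 0) → a = b := by decide
    exact this _ _ hiff

lemma ft_add {v w : V ν} (hv : v ≠ 0) (hw : w ≠ 0) (hvw : v ≠ w) :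
    ft ν τ (v + w) = ft ν τ v + ft ν τ w := by
  have hvw0 : v + w ≠ 0 := by
    intro h
    apply hvw
    have hneg : ∀ a : ZMod 2, -a = a := by decide
    rw [add_eq_zero_iff_eq_neg] at h
    exact h.trans (by funext k; simp [hneg])
  apply bB_left_cancel ν
  intro u hu
  obtain ⟨z, hz, rfl⟩ := ft_surj ν τ hu
  rw [bB_pres ν τ hvw0 hz, bB_add_left, bB_add_left,
    bB_pres ν τ hv hz, bB_pres ν τ hw hz]

end AutSpAux

namespace AutSpAux

variable (ν : ℕ) (τ : SpG (ZMod 2) ν ≃g SpG (ZMod 2) ν)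

/-- sum of standard basis vectors over a finset -/
def es (s : Finset (Fin (2 * ν))) : V ν := ∑ j ∈ s, Pi.single j 1

lemma es_apply (s : Finset (Fin (2 * ν))) (k : Fin (2 * ν)) :
    es ν s k = if k ∈ s then 1 else 0 := by
  rw [es, Finset.sum_apply]
  rw [Finset.sum_congr rfl fun j _ => (Pi.single_apply j (1 : ZMod 2) k)]
  exact Finset.sum_ite_eq s k (fun _ => (1 : ZMod 2))

lemma es_ne_zero {s : Finset (Fin (2 * ν))} (hs : s.Nonempty) : es ν s ≠ 0 := by
  obtain ⟨a, ha⟩ := hs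
  intro h
  have := congrFun h a
  rw [es_apply, if_pos ha] at this
  simp at this

lemma single_ne_zero (i : Fin (2 * ν)) : (Pi.single i 1 : V ν) ≠ 0 := by
  intro h
  have := congrFun h i
  simp at this

lemma ft_es {s : Finset (Fin (2 * ν))} (hs : s.Nonempty) :
    ft ν τ (es ν s) = ∑ j ∈ s, ft ν τ (Pi.single j 1) := by
  induction hs using Finset.Nonempty.cons_induction with
  | singleton a => simp [es]
  | cons a s ha hs ih =>
    have h1 : es ν (Finset.cons a s ha) = Pi.single a 1 + es ν s := by
      rw [es, Finset.sum_cons]; rfl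
    have h2 : (Pi.single a 1 : V ν) ≠ es ν s := by
      intro h
      have := congrFun h a
      rw [es_apply, if_neg ha] at this
      simp at this
    rw [h1, ft_add ν τ (single_ne_zero ν a) (es_ne_zero ν hs) h2, ih, Finset.sum_cons]

lemma eq_es {v : V ν} (hv : v ≠ 0) :
    v = es ν (Finset.univ.filter (fun j => v j ≠ 0)) := by
  funext k
  rw [es_apply]
  simp only [Finset.mem_filter, Finset.mem_univ, true_and]
  have : ∀ a : ZMod 2, a = if a ≠ 0 then 1 else 0 := by decide
  exact this (v k)

lemma filter_nonempty {v : V ν} (hv : v ≠ 0) :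
    (Finset.univ.filter (fun j => v j ≠ 0)).Nonempty := by
  by_contra h
  rw [Finset.not_nonempty_iff_eq_empty, Finset.filter_eq_empty_iff] at h
  apply hv
  funext k
  simpa using h (Finset.mem_univ k)

lemma ft_linear {v : V ν} (hv : v ≠ 0) (j : Fin (2 * ν)) :
    ft ν τ v j = ∑ i, v i * ft ν τ (Pi.single i 1) j := by
  set s := Finset.univ.filter (fun j => v j ≠ 0) with hsdef
  have h1 : ft ν τ v = ∑ i ∈ s, ft ν τ (Pi.single i 1) := by
    conv_lhs => rw [eq_es ν hv]
    exact ft_es ν τ (filter_nonempty ν hv)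
  rw [h1, Finset.sum_apply]
  rw [Finset.sum_filter]
  refine Finset.sum_congr rfl fun i _ => ?_
  have : ∀ a b : ZMod 2, (if a ≠ 0 then b else 0) = a * b := by decide
  exact this (v i) (ft ν τ (Pi.single i 1) j)

end AutSpAux


open AutSpAux

/-- Every graph automorphism of `Sp(2ν,2)` is induced by a symplectic linear map.
(Over `F_2`, a vertex, i.e. a one-dimensional subspace, is determined by its unique
nonzero vector, its representative `rep`; so `τ([α]) = [αT]` reads
`(τ x).rep = x.rep ᵥ* T`.) -/
theorem aut_SpG_two_induced_by_symplectic (ν : ℕ) (hν : 1 ≤ ν)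
    (τ : SpG (ZMod 2) ν ≃g SpG (ZMod 2) ν) :
    ∃ T : Matrix (Fin (2 * ν)) (Fin (2 * ν)) (ZMod 2),
      T * sK (ZMod 2) ν * Tᵀ = sK (ZMod 2) ν ∧
      ∀ x : Projectivization (ZMod 2) (Fin (2 * ν) → ZMod 2),
        (τ x).rep = x.rep ᵥ* T := by
  refine ⟨Matrix.of fun i j => ft ν τ (Pi.single i 1) j, ?_, ?_⟩
  · ext i j
    have key : bB ν (ft ν τ (Pi.single i 1)) (ft ν τ (Pi.single j 1)) = sK (ZMod 2) ν i j := by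
      rw [bB_pres ν τ (single_ne_zero ν i) (single_ne_zero ν j), bB_single_single]
    rw [← key]
    rw [Matrix.mul_assoc, Matrix.mul_apply]
    rw [bB_eq]
    refine Finset.sum_congr rfl fun k _ => ?_
    rw [Matrix.mul_apply]
    congr 1
    rw [Finset.sum_congr rfl fun l _ => ?_]
    · rw [← sK_mulVec ν (ft ν τ (Pi.single j 1)) k]
      rfl
    · rw [Matrix.transpose_apply]
      rfl
  · intro x
    have hrep : x.rep ≠ 0 := Projectivization.rep_nonzero x
    have h1 : (τ x).rep = ft ν τ x.rep := by
      rw [ft_spec ν τ hrep, Projectivization.mk_rep]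
    rw [h1]
    funext j
    rw [ft_linear ν τ hrep j]
    rfl
end

section
/- Let q > 2 and ν > 1, let e_1, f_1, …, e_ν, f_ν denote the standard basis vectors of F_q^{(2ν)} (in this order), and let E be the subgroup of Aut(Sp(2ν,q)) consisting of those automorphisms σ with σ([e_i]) = [e_i] and σ([f_i]) = [f_i] for i = 1, …, ν. Then E is isomorphic to the semidirect product (F_q^* × ⋯ × F_q^*) ⋊_φ Aut(F_q), with ν factors F_q^*, where φ is the coordinatewise action φ(π)(k_1,…,k_ν) = (π(k_1),…,π(k_ν)) of the field automorphism group Aut(F_q) on (F_q^*)^ν. -/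
open Matrix

/-- The standard basis vector `e_i` of `F^(2ν)`. -/
def eVec (F : Type) [Field F] (ν : ℕ) (i : Fin ν) : Fin (2 * ν) → F :=
  Pi.single ⟨2 * i.val, by have := i.isLt; omega⟩ 1

/-- The standard basis vector `f_i` of `F^(2ν)`. -/
def fVec (F : Type) [Field F] (ν : ℕ) (i : Fin ν) : Fin (2 * ν) → F :=
  Pi.single ⟨2 * i.val + 1, by have := i.isLt; omega⟩ 1

theorem eVec_ne_zero (F : Type) [Field F] (ν : ℕ) (i : Fin ν) : eVec F ν i ≠ 0 := by
  intro h
  have := congrFun h ⟨2 * i.val, by have := i.isLt; omega⟩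
  simp [eVec, Pi.single_eq_same] at this

theorem fVec_ne_zero (F : Type) [Field F] (ν : ℕ) (i : Fin ν) : fVec F ν i ≠ 0 := by
  intro h
  have := congrFun h ⟨2 * i.val + 1, by have := i.isLt; omega⟩
  simp [fVec, Pi.single_eq_same] at this

/-- The vertex `[e_i]` of `Sp(2ν,q)`. -/
def eP (F : Type) [Field F] (ν : ℕ) (i : Fin ν) : Projectivization F (Fin (2 * ν) → F) :=
  Projectivization.mk F (eVec F ν i) (eVec_ne_zero F ν i)

/-- The vertex `[f_i]` of `Sp(2ν,q)`. -/
def fP (F : Type) [Field F] (ν : ℕ) (i : Fin ν) : Projectivization F (Fin (2 * ν) → F) :=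
  Projectivization.mk F (fVec F ν i) (fVec_ne_zero F ν i)

/-- The subgroup `E` of `Aut(Sp(2ν,q))` of automorphisms fixing all the vertices
`[e_i]` and `[f_i]`, realized inside the permutation group of the vertices. -/
def Efix (F : Type) [Field F] (ν : ℕ) :
    Subgroup (Equiv.Perm (Projectivization F (Fin (2 * ν) → F))) where
  carrier := {σ | (∀ x y, (SpG F ν).Adj (σ x) (σ y) ↔ (SpG F ν).Adj x y) ∧
    ∀ i : Fin ν, σ (eP F ν i) = eP F ν i ∧ σ (fP F ν i) = fP F ν i}
  one_mem' := ⟨fun _ _ => Iff.rfl, fun _ => ⟨rfl, rfl⟩⟩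
  mul_mem' := by
    intro a b ha hb
    refine ⟨?_, ?_⟩
    · intro x y
      simpa [Equiv.Perm.mul_apply] using (ha.1 (b x) (b y)).trans (hb.1 x y)
    · intro i
      simp [Equiv.Perm.mul_apply, (hb.2 i).1, (hb.2 i).2, (ha.2 i).1, (ha.2 i).2]
  inv_mem' := by
    intro a ha
    refine ⟨?_, fun i => ⟨?_, ?_⟩⟩
    · intro x y
      rw [← ha.1 (a⁻¹ x) (a⁻¹ y)]
      simp
    · nth_rewrite 1 [← (ha.2 i).1]
      simp
    · nth_rewrite 1 [← (ha.2 i).2]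
      simp

/-- The coordinatewise action of the field automorphism group `Aut(F_q)` on
`F_q^* × ⋯ × F_q^*` (`ν` factors). -/
def phiAct (F : Type) [Field F] (ν : ℕ) : RingAut F →* MulAut (Fin ν → Fˣ) where
  toFun π := MulEquiv.piCongrRight fun _ => Units.mapEquiv π.toMulEquiv
  map_one' := by
    ext k i
    rfl
  map_mul' := by
    intro π₁ π₂
    ext k i
    rfl

/-!
An automorphism `σ ∈ E` fixes every vertex `[e_j]`, `[f_j]`, hence preserves the support of
every point. Orthogonality to the points of the line `⟨e_{a'}, e_{b'}⟩` (where `a'` is the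
hyperbolic partner of `a`) detects the affine coordinate `x_b / x_a`, so on each chart `x_a ≠ 0`
the automorphism acts coordinatewise, by maps `D_{ab} : F → F`. Comparing the symplectic relation
between points supported on `{a, a', c}` and `{a, a', c'}` before and after `σ` gives
`D_{aa'}(s - ε u w) = D_{aa'}(s) - ε D_{ac}(u) D_{ac'}(w)` with a sign `ε = ±1`. This functional
equation of Cauchy type makes `D_{aa'}` a multiple of a field endomorphism `π` (an automorphism,
`F` being finite), and then every
`D_{ab}(t) = κ_b π(t)` with `κ_b κ_{b'}` independent of `b`. Hence `σ` agrees, on one chart, with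
the semilinear map `x ↦ (κ_j π(x_j))_j`; these maps form `(F^*)^ν ⋊ Aut(F)`, and an element of `E`
is determined by its restriction to one chart.
-/

open Projectivization
open scoped LinearAlgebra.Projectivization

section CauchyEquation

variable {K : Type*} [Field K] {A f g : K → K} {e : K} (h0 : A 0 = 0) (he : e * e = 1)
  (h : ∀ s u w, A (s - e * (u * w)) = A s - e * (f u * g w))
include h0 he h

theorem map_add_of_map_sub_mul (s t : K) : A (s + t) = A s + A t := by
  have key : ∀ s, A (s + t) = A s - e * (f (-(e * t)) * g 1) := fun s => by
    rw [← h]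
    congr 1
    linear_combination (-t) * he
  have key0 := key 0
  rw [zero_add, h0, zero_sub] at key0
  rw [key, key0]
  ring

theorem map_mul_of_map_sub_mul (u w : K) : A (u * w) = f u * g w := by
  have hneg : ∀ x, A (-x) = -A x := fun x => by
    have hx := map_add_of_map_sub_mul h0 he h x (-x)
    rw [add_neg_cancel, h0] at hx
    linear_combination -hx
  have hs := h 0 u w
  rw [zero_sub, h0, zero_sub] at hs
  rcases mul_self_eq_one_iff.1 he with rfl | rfl
  · rw [one_mul, one_mul, hneg] at hs
    linear_combination -hs
  · rw [neg_one_mul, neg_one_mul, neg_neg, neg_neg] at hs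
    exact hs

theorem exists_ringHom_of_map_sub_mul (h1 : A 1 ≠ 0) : ∃ π : K →+* K, ∀ t, A t = A 1 * π t := by
  have hm := map_mul_of_map_sub_mul h0 he h
  refine ⟨{ toFun := fun t => A t / A 1
            map_one' := div_self h1
            map_mul' := fun u w => ?_
            map_zero' := by simp [h0]
            map_add' := fun s t => by simp [map_add_of_map_sub_mul h0 he h, add_div] },
    fun t => (mul_div_cancel₀ (A t) h1).symm⟩
  have hu := hm u 1
  have hw := hm 1 w
  have h11 := hm 1 1
  rw [mul_one] at hu h11
  rw [one_mul] at hw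
  show A (u * w) / A 1 = A u / A 1 * (A w / A 1)
  rw [div_mul_div_comm, div_eq_div_iff h1 (mul_ne_zero h1 h1), hm, hu, hw, h11]
  ring

end CauchyEquation

namespace SpG

section Coordinates

variable {K ι : Type*} [Field K]

def ratio (x : ι → K) (a b : ι) : K := x b / x a

theorem ratio_self {x : ι → K} {a : ι} (ha : x a ≠ 0) : ratio x a a = 1 := div_self ha

theorem ratio_eq_zero_iff {x : ι → K} {a b : ι} (ha : x a ≠ 0) : ratio x a b = 0 ↔ x b = 0 := by
  simp [ratio, ha]

theorem smul_ratio {x : ι → K} {a : ι} (ha : x a ≠ 0) : x a • ratio x a = x :=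
  funext fun b => by simp [ratio, mul_div_cancel₀ _ ha]

theorem ratio_smul (c : Kˣ) (x : ι → K) (a b : ι) : ratio (c • x) a b = ratio x a b := by
  simp only [ratio, Pi.smul_apply, Units.smul_def, smul_eq_mul]
  exact mul_div_mul_left _ _ c.ne_zero

theorem ratio_rep_mk {x : ι → K} (hx : x ≠ 0) (a b : ι) :
    ratio (mk K x hx).rep a b = ratio x a b := by
  obtain ⟨u, hu⟩ := exists_smul_eq_mk_rep K x hx
  rw [← hu, ratio_smul]

theorem rep_mk_apply_eq_zero_iff {x : ι → K} (hx : x ≠ 0) (j : ι) :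
    (mk K x hx).rep j = 0 ↔ x j = 0 := by
  obtain ⟨u, hu⟩ := exists_smul_eq_mk_rep K x hx
  rw [← hu, Pi.smul_apply, Units.smul_def, smul_eq_mul, mul_eq_zero]
  simp

theorem eq_of_ratio_eq {p q : ℙ K (ι → K)} {a : ι} (hp : p.rep a ≠ 0) (hq : q.rep a ≠ 0)
    (h : ∀ b, ratio p.rep a b = ratio q.rep a b) : p = q := by
  rw [← mk_rep p, ← mk_rep q, mk_eq_mk_iff']
  refine ⟨p.rep a / q.rep a, funext fun b => ?_⟩
  have hb := h b
  simp only [ratio] at hb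
  rw [Pi.smul_apply, smul_eq_mul]
  field_simp at hb ⊢
  linear_combination -hb

theorem single_add_single_ne_zero [DecidableEq ι] {a b : ι} (hab : a ≠ b) {s : K} (hs : s ≠ 0)
    (t : K) : (Pi.single a s + Pi.single b t : ι → K) ≠ 0 := fun h =>
  hs (by simpa [Pi.single_apply, hab.symm] using congrFun h a)

/-- The map induced by `σ` on the affine coordinate `x b / x a` of the chart `x a ≠ 0`;
on the diagonal `a = b` it is taken to be the identity. -/
noncomputable def coordMap [DecidableEq ι] (σ : Equiv.Perm (ℙ K (ι → K))) (a b : ι) (t : K) : K :=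
  if hab : a = b then t
  else ratio (σ (mk K (Pi.single a 1 + Pi.single b t)
    (single_add_single_ne_zero hab one_ne_zero t))).rep a b

theorem coordMap_self [DecidableEq ι] (σ : Equiv.Perm (ℙ K (ι → K))) (a : ι) (t : K) :
    coordMap σ a a t = t :=
  dif_pos rfl

def scaleMap (w : ι → Kˣ) (π : K →+* K) : (ι → K) →ₛₗ[π] (ι → K) where
  toFun x j := w j * π (x j)
  map_add' x y := by ext j; simp [mul_add]
  map_smul' c x := by ext j; simp only [Pi.smul_apply, smul_eq_mul, map_mul]; ring

theorem scaleMap_apply (w : ι → Kˣ) (π : K →+* K) (x : ι → K) (j : ι) :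
    scaleMap w π x j = w j * π (x j) :=
  rfl

theorem scaleMap_injective (w : ι → Kˣ) (π : K →+* K) : Function.Injective (scaleMap w π) :=
  (injective_iff_map_eq_zero _).2 fun x hx => funext fun j => by
    simpa [scaleMap_apply] using congrFun hx j

theorem ratio_scaleMap (w : ι → Kˣ) (π : K →+* K) (x : ι → K) (a b : ι) :
    ratio (scaleMap w π x) a b = w b / w a * π (ratio x a b) := by
  rw [ratio, ratio, scaleMap_apply, scaleMap_apply, map_div₀, mul_div_mul_comm]

end Coordinates

variable {F : Type} [Field F] {ν : ℕ}

def partner (j : Fin (2 * ν)) : Fin (2 * ν) :=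
  ⟨if j.val % 2 = 0 then j.val + 1 else j.val - 1, by have := j.isLt; split <;> omega⟩

@[simp]
theorem partner_partner (j : Fin (2 * ν)) : partner (partner j) = j := by
  ext; simp only [partner]; split_ifs <;> omega

theorem partner_ne (j : Fin (2 * ν)) : partner j ≠ j := by
  simp only [partner, ne_eq, Fin.ext_iff]; split_ifs <;> omega

theorem partner_injective : Function.Injective (partner (ν := ν)) :=
  Function.LeftInverse.injective partner_partner

variable (F) in
def formSign (j : Fin (2 * ν)) : F := if j.val % 2 = 0 then 1 else -1

theorem formSign_partner (j : Fin (2 * ν)) : formSign F (partner j) = -formSign F j := by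
  simp only [formSign, partner]; split_ifs <;> first | omega | simp

theorem formSign_mul_self (j : Fin (2 * ν)) : formSign F j * formSign F j = 1 := by
  unfold formSign; split_ifs <;> simp

theorem formSign_mul_self_mul_self (i j : Fin (2 * ν)) :
    formSign F i * formSign F j * (formSign F i * formSign F j) = 1 := by
  linear_combination (formSign F j * formSign F j) * formSign_mul_self (F := F) i +
    formSign_mul_self (F := F) j

theorem formSign_ne_zero (j : Fin (2 * ν)) : formSign F j ≠ 0 :=
  left_ne_zero_of_mul_eq_one (formSign_mul_self j)

theorem sK_apply (i j : Fin (2 * ν)) :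
    sK F ν i j = if j = partner i then formSign F i else 0 := by
  simp only [sK, of_apply, partner, formSign, Fin.ext_iff]
  split_ifs <;> first | rfl | omega

def sympForm (x y : Fin (2 * ν) → F) : F := ∑ j, formSign F j * x j * y (partner j)

theorem dotProduct_sK_mulVec (x y : Fin (2 * ν) → F) : x ⬝ᵥ (sK F ν *ᵥ y) = sympForm x y := by
  simp only [dotProduct, mulVec, sK_apply, ite_mul, zero_mul, Finset.sum_ite_eq',
    Finset.mem_univ, if_true, sympForm]
  exact Finset.sum_congr rfl fun _ _ => by ring

theorem sympForm_smul_left (c : F) (x y : Fin (2 * ν) → F) :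
    sympForm (c • x) y = c * sympForm x y := by
  simp only [sympForm, Pi.smul_apply, smul_eq_mul, Finset.mul_sum]
  exact Finset.sum_congr rfl fun _ _ => by ring

theorem sympForm_smul_right (c : F) (x y : Fin (2 * ν) → F) :
    sympForm x (c • y) = c * sympForm x y := by
  simp only [sympForm, Pi.smul_apply, smul_eq_mul, Finset.mul_sum]
  exact Finset.sum_congr rfl fun _ _ => by ring

theorem sympForm_self (x : Fin (2 * ν) → F) : sympForm x x = 0 :=
  Finset.sum_ninvolution partner (fun j => by rw [partner_partner, formSign_partner]; ring)
    (fun j _ => partner_ne j) (fun _ => Finset.mem_univ _) partner_partner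

theorem sympForm_swap (x y : Fin (2 * ν) → F) : sympForm y x = -sympForm x y := by
  rw [sympForm, sympForm, ← Finset.sum_neg_distrib]
  refine Fintype.sum_bijective partner (Function.Involutive.bijective partner_partner) _ _
    fun j => ?_
  rw [partner_partner, formSign_partner]
  ring

theorem sympForm_eq_sum_of_support (s : Finset (Fin (2 * ν))) {x y : Fin (2 * ν) → F}
    (h : ∀ j ∉ s, x j * y (partner j) = 0) :
    sympForm x y = ∑ j ∈ s, formSign F j * x j * y (partner j) :=
  (Finset.sum_subset (Finset.subset_univ s) fun j _ hj => by rw [mul_assoc, h j hj, mul_zero]).symm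

theorem sympForm_eq_of_support_pair {a b : Fin (2 * ν)} (hab : a ≠ b) {x y : Fin (2 * ν) → F}
    (hy : ∀ j, j ≠ partner a → j ≠ partner b → y j = 0) :
    sympForm x y = formSign F a * x a * y (partner a) + formSign F b * x b * y (partner b) := by
  refine (sympForm_eq_sum_of_support {a, b} fun j hj => ?_).trans (Finset.sum_pair hab)
  simp only [Finset.mem_insert, Finset.mem_singleton, not_or] at hj
  rw [hy _ (partner_injective.ne hj.1) (partner_injective.ne hj.2), mul_zero]

theorem adj_iff {p q : ℙ F (Fin (2 * ν) → F)} :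
    (SpG F ν).Adj p q ↔ sympForm p.rep q.rep ≠ 0 := by
  rw [SpG, SimpleGraph.fromRel_adj, dotProduct_sK_mulVec, dotProduct_sK_mulVec,
    sympForm_swap q.rep, neg_ne_zero, or_self]
  refine ⟨And.right, fun h => ⟨?_, h⟩⟩
  rintro rfl
  exact h (sympForm_self _)

theorem sympForm_rep_mk_left_eq_zero_iff {x : Fin (2 * ν) → F} (hx : x ≠ 0) (y : Fin (2 * ν) → F) :
    sympForm (mk F x hx).rep y = 0 ↔ sympForm x y = 0 := by
  obtain ⟨u, hu⟩ := exists_smul_eq_mk_rep F x hx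
  rw [← hu, Units.smul_def, sympForm_smul_left, mul_eq_zero]
  simp

theorem sympForm_rep_mk_right_eq_zero_iff (x : Fin (2 * ν) → F) {y : Fin (2 * ν) → F}
    (hy : y ≠ 0) : sympForm x (mk F y hy).rep = 0 ↔ sympForm x y = 0 := by
  obtain ⟨u, hu⟩ := exists_smul_eq_mk_rep F y hy
  rw [← hu, Units.smul_def, sympForm_smul_right, mul_eq_zero]
  simp

theorem adj_mk_iff {x y : Fin (2 * ν) → F} (hx : x ≠ 0) (hy : y ≠ 0) :
    (SpG F ν).Adj (mk F x hx) (mk F y hy) ↔ sympForm x y ≠ 0 := by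
  rw [adj_iff, Ne, sympForm_rep_mk_left_eq_zero_iff, sympForm_rep_mk_right_eq_zero_iff]

theorem sympForm_eq_zero_iff_ratio {x y : Fin (2 * ν) → F} {a : Fin (2 * ν)} (hx : x a ≠ 0)
    (hy : y a ≠ 0) : sympForm x y = 0 ↔ sympForm (ratio x a) (ratio y a) = 0 := by
  conv_lhs => rw [← smul_ratio hx, ← smul_ratio hy, sympForm_smul_left, sympForm_smul_right]
  simp [hx, hy]

theorem sympForm_triple {a c : Fin (2 * ν)} (hca : c ≠ a) (hcpa : c ≠ partner a)
    (f : Fin (2 * ν) → F → F) (hf1 : f a 1 = 1) (hf0 : ∀ b ≠ a, f b 0 = 0) (s s' u w : F) :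
    sympForm (fun b => f b ((Pi.single a 1 + Pi.single (partner a) s + Pi.single c u :
          Fin (2 * ν) → F) b))
        (fun b => f b ((Pi.single a 1 + Pi.single (partner a) s' + Pi.single (partner c) w :
          Fin (2 * ν) → F) b)) =
      formSign F a * (f (partner a) s' - f (partner a) s) +
        formSign F c * f c u * f (partner c) w := by
  have hpa : partner a ≠ a := partner_ne a
  have hpca : partner c ≠ a := fun h => hcpa (by rw [← h, partner_partner])
  have hpcpa : partner c ≠ partner a := partner_injective.ne hca
  rw [sympForm_eq_sum_of_support {a, partner a, c} fun j hj => ?_]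
  · rw [Finset.sum_insert (by simp [hpa.symm, hca.symm]), Finset.sum_insert (by simp [hcpa.symm]),
      Finset.sum_singleton, partner_partner, formSign_partner]
    simp [hpa, hpa.symm, hca, hca.symm, hcpa, hcpa.symm, hpca, hpca.symm, hpcpa, hpcpa.symm, hf1]
    ring
  · simp only [Finset.mem_insert, Finset.mem_singleton, not_or] at hj
    simp [hj.1, hj.2.1, hj.2.2, hf0 j hj.1]

theorem ratio_eq_of_sympForm_eq_zero {a b : Fin (2 * ν)} (hab : a ≠ b) {x x' z : Fin (2 * ν) → F}
    (hz : ∀ j, j ≠ partner a → j ≠ partner b → z j = 0) (hzb : z (partner b) ≠ 0)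
    (hx : x a ≠ 0) (hx' : x' a ≠ 0) (h : sympForm x z = 0) (h' : sympForm x' z = 0) :
    ratio x a b = ratio x' a b := by
  rw [sympForm_eq_of_support_pair hab hz] at h h'
  rw [ratio, ratio, div_eq_div_iff hx hx']
  refine mul_left_cancel₀ (mul_ne_zero (formSign_ne_zero b) hzb) ?_
  linear_combination x' a * h - x a * h'

def basisPoint (j : Fin (2 * ν)) : ℙ F (Fin (2 * ν) → F) :=
  mk F (Pi.single j 1) (Pi.single_ne_zero_iff.2 one_ne_zero)

theorem adj_basisPoint_iff (p : ℙ F (Fin (2 * ν) → F)) (j : Fin (2 * ν)) :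
    (SpG F ν).Adj p (basisPoint j) ↔ p.rep (partner j) ≠ 0 := by
  rw [← mk_rep p, basisPoint, adj_mk_iff, mk_rep,
    sympForm_eq_sum_of_support {partner j} fun i hi => by
      rw [Pi.single_eq_of_ne (fun h => hi (by simp [← h])), mul_zero]]
  simp [formSign_ne_zero]

namespace Efix

variable {σ : Equiv.Perm (ℙ F (Fin (2 * ν) → F))} (hσ : σ ∈ Efix F ν)
include hσ

theorem apply_basisPoint (j : Fin (2 * ν)) : σ (basisPoint j) = basisPoint j := by
  obtain ⟨i, rfl | rfl⟩ : ∃ i : Fin ν, j = ⟨2 * i, by omega⟩ ∨ j = ⟨2 * i + 1, by omega⟩ :=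
    ⟨⟨j / 2, by omega⟩, by simp only [Fin.ext_iff]; omega⟩
  exacts [(hσ.2 i).1, (hσ.2 i).2]

theorem rep_apply_eq_zero_iff (p : ℙ F (Fin (2 * ν) → F)) (j : Fin (2 * ν)) :
    (σ p).rep j = 0 ↔ p.rep j = 0 := by
  have h := hσ.1 p (basisPoint (partner j))
  rw [apply_basisPoint hσ, adj_basisPoint_iff, adj_basisPoint_iff, partner_partner] at h
  exact not_iff_not.1 h

theorem sympForm_apply_eq_zero_iff (p q : ℙ F (Fin (2 * ν) → F)) :
    sympForm (σ p).rep (σ q).rep = 0 ↔ sympForm p.rep q.rep = 0 := by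
  rw [← not_iff_not]
  exact (adj_iff.symm.trans ((hσ.1 p q).trans adj_iff))

/-- Orthogonality to the point `[ε_b r e_{a'} - ε_a e_{b'}]` cuts out the points with
`x b / x a = r`; since `σ` maps that point to a point of the same line `⟨e_{a'}, e_{b'}⟩`,
the images again have a common ratio. -/
theorem ratio_apply_eq_of_ratio_eq {a b : Fin (2 * ν)} (hab : a ≠ b)
    {p q : ℙ F (Fin (2 * ν) → F)} (hp : p.rep a ≠ 0) (hq : q.rep a ≠ 0)
    (h : ratio p.rep a b = ratio q.rep a b) : ratio (σ p).rep a b = ratio (σ q).rep a b := by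
  have hab' : partner b ≠ partner a := partner_injective.ne hab.symm
  set y : Fin (2 * ν) → F :=
    Pi.single (partner b) (-formSign F a) + Pi.single (partner a) (formSign F b * ratio p.rep a b)
  have hy : y ≠ 0 := single_add_single_ne_zero hab' (neg_ne_zero.2 (formSign_ne_zero a)) _
  have hy_supp : ∀ j, j ≠ partner a → j ≠ partner b → y j = 0 := fun j h1 h2 => by
    simp [y, h1, h2]
  have perp : ∀ r : ℙ F (Fin (2 * ν) → F), r.rep a ≠ 0 → ratio r.rep a b = ratio p.rep a b →
      sympForm (σ r).rep (σ (mk F y hy)).rep = 0 := fun r hr hrp => by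
    have hrb : r.rep b = r.rep a * ratio p.rep a b := by rw [← hrp, ratio, mul_div_cancel₀ _ hr]
    rw [sympForm_apply_eq_zero_iff hσ, sympForm_rep_mk_right_eq_zero_iff,
      sympForm_eq_of_support_pair hab hy_supp, hrb]
    simp only [y, Pi.add_apply, Pi.single_eq_same, Pi.single_eq_of_ne hab'.symm,
      Pi.single_eq_of_ne hab']
    ring
  refine ratio_eq_of_sympForm_eq_zero hab (fun j h1 h2 => ?_) ?_
    (by rwa [Ne, rep_apply_eq_zero_iff hσ]) (by rwa [Ne, rep_apply_eq_zero_iff hσ])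
    (perp p hp rfl) (perp q hq h.symm)
  · rw [rep_apply_eq_zero_iff hσ, rep_mk_apply_eq_zero_iff]
    exact hy_supp j h1 h2
  · rw [Ne, rep_apply_eq_zero_iff hσ, rep_mk_apply_eq_zero_iff]
    simpa [y, Pi.single_apply, hab'] using formSign_ne_zero a

theorem ratio_apply {p : ℙ F (Fin (2 * ν) → F)} {a : Fin (2 * ν)} (hp : p.rep a ≠ 0)
    (b : Fin (2 * ν)) : ratio (σ p).rep a b = coordMap σ a b (ratio p.rep a b) := by
  by_cases hab : a = b
  · subst hab
    rw [coordMap, dif_pos rfl, ratio_self hp, ratio_self (by rwa [Ne, rep_apply_eq_zero_iff hσ])]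
  rw [coordMap, dif_neg hab]
  refine ratio_apply_eq_of_ratio_eq hσ hab hp ?_ ?_
  · simp [rep_mk_apply_eq_zero_iff, hab]
  · rw [ratio_rep_mk, ratio, ratio]
    simp [Ne.symm hab]

theorem coordMap_eq_zero_iff {a b : Fin (2 * ν)} {t : F} : coordMap σ a b t = 0 ↔ t = 0 := by
  by_cases hab : a = b
  · rw [coordMap, dif_pos hab]
  rw [coordMap, dif_neg hab, ratio_eq_zero_iff, rep_apply_eq_zero_iff hσ,
    rep_mk_apply_eq_zero_iff]
  · simp [Ne.symm hab]
  · rw [Ne, rep_apply_eq_zero_iff hσ, rep_mk_apply_eq_zero_iff]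
    simp [hab]

theorem sympForm_coordMap_eq_zero {a : Fin (2 * ν)} {x y : Fin (2 * ν) → F} (hxa : x a = 1)
    (hya : y a = 1) (h : sympForm x y = 0) :
    sympForm (fun b => coordMap σ a b (x b)) (fun b => coordMap σ a b (y b)) = 0 := by
  have hx : x ≠ 0 := fun h => one_ne_zero (hxa.symm.trans (congrFun h a))
  have hy : y ≠ 0 := fun h => one_ne_zero (hya.symm.trans (congrFun h a))
  have chart : ∀ (z : Fin (2 * ν) → F) (hz : z ≠ 0), z a = 1 →
      ratio (σ (mk F z hz)).rep a = fun b => coordMap σ a b (z b) := fun z hz hza => by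
    have hza' : (mk F z hz).rep a ≠ 0 := by simp [rep_mk_apply_eq_zero_iff, hza]
    ext b
    rw [ratio_apply hσ hza', ratio_rep_mk, ratio, hza, div_one]
  have hσx : (σ (mk F x hx)).rep a ≠ 0 := by
    simp [rep_apply_eq_zero_iff hσ, rep_mk_apply_eq_zero_iff, hxa]
  have hσy : (σ (mk F y hy)).rep a ≠ 0 := by
    simp [rep_apply_eq_zero_iff hσ, rep_mk_apply_eq_zero_iff, hya]
  rwa [← sympForm_rep_mk_left_eq_zero_iff hx, ← sympForm_rep_mk_right_eq_zero_iff _ hy,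
    ← sympForm_apply_eq_zero_iff hσ, sympForm_eq_zero_iff_ratio hσx hσy, chart x hx hxa,
    chart y hy hya] at h

/-- The symplectic relation between the points `e_a + s e_{a'} + u e_c` and
`e_a + s' e_{a'} + w e_{c'}`, before and after `σ`, yields Cauchy's equation for the coordinate
map of the hyperbolic pair `(a, a')`. -/
theorem coordMap_partner_sub {a c : Fin (2 * ν)} (hca : c ≠ a) (hcpa : c ≠ partner a)
    (s u w : F) :
    coordMap σ a (partner a) (s - formSign F a * formSign F c * (u * w)) =
      coordMap σ a (partner a) s -
        formSign F a * formSign F c * (coordMap σ a c u * coordMap σ a (partner c) w) := by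
  set s' := s - formSign F a * formSign F c * (u * w)
  have hpa : partner a ≠ a := partner_ne a
  have hpca : partner c ≠ a := fun h => hcpa (by rw [← h, partner_partner])
  have horth := sympForm_triple hca hcpa (fun _ t => t) rfl (fun _ _ => rfl) s s' u w
  have h := sympForm_coordMap_eq_zero hσ (a := a) (by simp [hpa.symm, hca.symm])
    (by simp [hpa.symm, hpca.symm]) (horth.trans
      (by linear_combination (-(formSign F c * u * w)) * formSign_mul_self (F := F) a))
  rw [sympForm_triple hca hcpa _ (coordMap_self σ a 1) fun b hb => (coordMap_eq_zero_iff hσ).2 rfl]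
    at h
  linear_combination formSign F a * h -
    (coordMap σ a (partner a) s' - coordMap σ a (partner a) s) * formSign_mul_self (F := F) a

theorem coordMap_one_mul_coordMap_partner (a b : Fin (2 * ν)) :
    coordMap σ a b 1 * coordMap σ a (partner b) 1 = coordMap σ a (partner a) 1 := by
  by_cases hba : b = a
  · rw [hba, coordMap_self, one_mul]
  by_cases hbpa : b = partner a
  · rw [hbpa, partner_partner, coordMap_self, mul_one]
  have fe := coordMap_partner_sub hσ hba hbpa
  rw [← map_mul_of_map_sub_mul ((coordMap_eq_zero_iff hσ).2 rfl) (formSign_mul_self_mul_self a b)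
    fe, mul_one]

theorem exists_ringHom_ratio_apply {a c : Fin (2 * ν)} (hca : c ≠ a) (hcpa : c ≠ partner a) :
    ∃ π : F →+* F, ∀ p : ℙ F (Fin (2 * ν) → F), p.rep a ≠ 0 → ∀ b,
      ratio (σ p).rep a b = coordMap σ a b 1 * π (ratio p.rep a b) := by
  have h0 : coordMap σ a (partner a) 0 = 0 := (coordMap_eq_zero_iff hσ).2 rfl
  have h1 : coordMap σ a (partner a) 1 ≠ 0 := (coordMap_eq_zero_iff hσ).not.2 one_ne_zero
  obtain ⟨π, hπ⟩ := exists_ringHom_of_map_sub_mul h0 (formSign_mul_self_mul_self a c)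
    (coordMap_partner_sub hσ hca hcpa) h1
  refine ⟨π, fun p hp b => ?_⟩
  rw [ratio_apply hσ hp]
  by_cases hba : b = a
  · rw [hba, coordMap_self, coordMap_self, ratio_self hp, map_one, one_mul]
  by_cases hbpa : b = partner a
  · rw [hbpa, hπ]
  have hm := map_mul_of_map_sub_mul h0 (formSign_mul_self_mul_self a b)
    (coordMap_partner_sub hσ hba hbpa)
  have hb' : coordMap σ a (partner b) 1 ≠ 0 := (coordMap_eq_zero_iff hσ).not.2 one_ne_zero
  have hmr := hm (ratio p.rep a b) 1
  have hm1 := hm 1 1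
  rw [mul_one] at hmr hm1
  refine mul_right_cancel₀ hb' ?_
  linear_combination -hmr + hπ _ + π (ratio p.rep a b) * hm1

end Efix

theorem Efix.eq_of_forall_rep_ne_zero {σ τ : Equiv.Perm (ℙ F (Fin (2 * ν) → F))}
    (hσ : σ ∈ Efix F ν) (hτ : τ ∈ Efix F ν) (c : Fin (2 * ν))
    (h : ∀ p : ℙ F (Fin (2 * ν) → F), p.rep c ≠ 0 → σ p = τ p) : σ = τ := by
  ext1 p
  by_cases hpc : p.rep c ≠ 0
  · exact h p hpc
  obtain ⟨a, ha⟩ : ∃ a, p.rep a ≠ 0 := by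
    by_contra! H
    exact p.rep_nonzero (funext H)
  have hac : a ≠ c := by rintro rfl; exact hpc ha
  refine eq_of_ratio_eq (a := a) (by rwa [Ne, Efix.rep_apply_eq_zero_iff hσ])
    (by rwa [Ne, Efix.rep_apply_eq_zero_iff hτ]) fun b => ?_
  by_cases hbc : b = c
  · rw [hbc, ratio, ratio, (Efix.rep_apply_eq_zero_iff hσ p c).2 (not_not.1 hpc),
      (Efix.rep_apply_eq_zero_iff hτ p c).2 (not_not.1 hpc), zero_div, zero_div]
  by_cases hab : a = b
  · rw [← hab, ratio_self (by rwa [Ne, Efix.rep_apply_eq_zero_iff hσ]),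
      ratio_self (by rwa [Ne, Efix.rep_apply_eq_zero_iff hτ])]
  -- a point of the chart `x c ≠ 0` with the same coordinates `a` and `b` as `p`
  set x := p.rep + Pi.single c 1
  have hxc : x c ≠ 0 := by simp [x, not_not.1 hpc]
  have hx : x ≠ 0 := fun h => hxc (congrFun h c)
  have hxa : (mk F x hx).rep a ≠ 0 := by simpa [rep_mk_apply_eq_zero_iff, x, hac] using ha
  have hrat : ratio p.rep a b = ratio (mk F x hx).rep a b := by
    rw [ratio_rep_mk]
    simp [ratio, x, hac, hbc]
  calc ratio (σ p).rep a b = ratio (σ (mk F x hx)).rep a b :=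
        Efix.ratio_apply_eq_of_ratio_eq hσ hab ha hxa hrat
    _ = ratio (τ (mk F x hx)).rep a b := by
        rw [h _ (by rwa [Ne, rep_mk_apply_eq_zero_iff])]
    _ = ratio (τ p).rep a b := (Efix.ratio_apply_eq_of_ratio_eq hτ hab ha hxa hrat).symm

theorem map_formSign (π : F →+* F) (j : Fin (2 * ν)) : π (formSign F j) = formSign F j := by
  unfold formSign; split_ifs <;> simp

theorem sympForm_scaleMap {w : Fin (2 * ν) → Fˣ} {c : F} (hw : ∀ j, (w j * w (partner j) : F) = c)
    (π : F →+* F) (x y : Fin (2 * ν) → F) :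
    sympForm (scaleMap w π x) (scaleMap w π y) = c * π (sympForm x y) := by
  simp only [sympForm, scaleMap_apply, map_sum, map_mul, map_formSign, Finset.mul_sum]
  exact Finset.sum_congr rfl fun j _ => by rw [← hw j]; ring

def pairIndex (j : Fin (2 * ν)) : Fin ν := ⟨j / 2, Nat.div_lt_of_lt_mul j.isLt⟩

theorem pairIndex_partner (j : Fin (2 * ν)) : pairIndex (partner j) = pairIndex j := by
  simp only [pairIndex, partner, Fin.ext_iff]
  split_ifs <;> omega

/-- The weights of the coordinates `e_i, f_i` are `k₀ / kᵢ, kᵢ`: each hyperbolic pair has weight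
product `k₀`, and `e_1` has weight `1`. -/
def weight (k : Fin ν → Fˣ) (j : Fin (2 * ν)) : Fˣ :=
  if j.val % 2 = 0 then k ⟨0, (pairIndex j).pos⟩ / k (pairIndex j) else k (pairIndex j)

theorem weight_mul_weight_partner (k : Fin ν → Fˣ) (j : Fin (2 * ν)) :
    weight k j * weight k (partner j) = k ⟨0, (pairIndex j).pos⟩ := by
  simp only [weight, pairIndex_partner]
  simp only [partner]
  split_ifs <;> first | omega | simp

theorem weight_one (j : Fin (2 * ν)) : weight (1 : Fin ν → Fˣ) j = 1 := by
  unfold weight; split_ifs <;> simp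

theorem weight_mul (k k' : Fin ν → Fˣ) (j : Fin (2 * ν)) :
    weight (k * k') j = weight k j * weight k' j := by
  unfold weight; split_ifs <;> simp [mul_div_mul_comm]

theorem weight_phiAct (π : RingAut F) (k : Fin ν → Fˣ) (j : Fin (2 * ν)) :
    (weight (phiAct F ν π k) j : F) = π (weight k j) := by
  unfold weight; split_ifs <;> simp [phiAct, map_div₀]

theorem weight_zero (k : Fin ν → Fˣ) (h : 0 < 2 * ν) : weight k ⟨0, h⟩ = 1 := by
  simp [weight, pairIndex]

theorem weight_odd (k : Fin ν → Fˣ) (i : Fin ν) : weight k ⟨2 * i + 1, by omega⟩ = k i := by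
  simp only [weight, pairIndex]
  rw [if_neg (by omega)]
  congr
  omega

theorem weight_eq_of_mul_partner (h1 : 1 < 2 * ν) (κ : Fin (2 * ν) → Fˣ)
    (hκ : ∀ j, κ j * κ (partner j) = κ ⟨1, h1⟩) :
    weight (fun i => κ ⟨2 * i + 1, by omega⟩) = κ := by
  funext j
  have hj := j.isLt
  unfold weight
  split_ifs with hev
  · have hpj : partner j = ⟨2 * (pairIndex j) + 1, by omega⟩ := by
      simp only [partner, pairIndex, hev, if_true, Fin.ext_iff]; omega
    rw [div_eq_iff_eq_mul]
    beta_reduce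
    rw [← hpj, hκ j]
    rfl
  · beta_reduce
    congr 1
    ext
    simp only [pairIndex]
    omega

section Action

variable (F ν) in
abbrev SemidirectAut : Type := (Fin ν → Fˣ) ⋊[phiAct F ν] RingAut F

noncomputable instance : MulAction (SemidirectAut F ν) (ℙ F (Fin (2 * ν) → F)) where
  smul g := Projectivization.map (scaleMap (weight g.left) (g.right : F →+* F))
    (scaleMap_injective _ _)
  one_smul p := by
    induction p using Projectivization.ind with | h x hx => ?_
    refine (map_mk _ _ _ _).trans ?_
    congr 1
    funext j
    simp [scaleMap_apply, weight_one]
  mul_smul g h p := by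
    induction p using Projectivization.ind with | h x hx => ?_
    change Projectivization.map _ _ (mk F x hx) =
      Projectivization.map _ _ (Projectivization.map _ _ (mk F x hx))
    simp only [map_mk]
    congr 1
    funext j
    simp [scaleMap_apply, weight_mul, weight_phiAct, mul_assoc]

theorem smul_mk (g : SemidirectAut F ν) {x : Fin (2 * ν) → F} (hx : x ≠ 0) :
    g • mk F x hx = mk F (scaleMap (weight g.left) (g.right : F →+* F) x)
        ((map_ne_zero_iff _ (scaleMap_injective _ _)).2 hx) :=
  map_mk _ _ _ _

theorem ratio_rep_smul (g : SemidirectAut F ν) (p : ℙ F (Fin (2 * ν) → F)) (a b : Fin (2 * ν)) :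
    ratio (g • p).rep a b = weight g.left b / weight g.left a * g.right (ratio p.rep a b) := by
  conv_lhs => rw [← mk_rep p, smul_mk, ratio_rep_mk, ratio_scaleMap]
  rfl

theorem smul_adj_smul_iff (hν : 0 < ν) (g : SemidirectAut F ν) (p q : ℙ F (Fin (2 * ν) → F)) :
    (SpG F ν).Adj (g • p) (g • q) ↔ (SpG F ν).Adj p q := by
  rw [← mk_rep p, ← mk_rep q, smul_mk, smul_mk, adj_mk_iff, adj_mk_iff,
    sympForm_scaleMap (c := (g.left ⟨0, hν⟩ : F)) fun j => by
      exact_mod_cast weight_mul_weight_partner g.left j]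
  simp

theorem smul_basisPoint (g : SemidirectAut F ν) (j : Fin (2 * ν)) :
    g • (basisPoint j : ℙ F (Fin (2 * ν) → F)) = basisPoint j := by
  rw [basisPoint, smul_mk, mk_eq_mk_iff']
  refine ⟨weight g.left j, funext fun i => ?_⟩
  by_cases hij : i = j
  · subst hij; simp [scaleMap_apply]
  · simp [scaleMap_apply, hij]

theorem toPerm_mem_Efix (hν : 0 < ν) (g : SemidirectAut F ν) :
    MulAction.toPerm g ∈ Efix F ν :=
  ⟨smul_adj_smul_iff hν g, fun _ => ⟨smul_basisPoint g _, smul_basisPoint g _⟩⟩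

theorem toPermHom_injective (hν : 0 < ν) :
    Function.Injective (MulAction.toPermHom (SemidirectAut F ν) (ℙ F (Fin (2 * ν) → F))) := by
  refine (injective_iff_map_eq_one _).2 fun g hg => ?_
  have fixes : ∀ p : ℙ F (Fin (2 * ν) → F), g • p = p := fun p => congrArg (· p) hg
  have key : ∀ i t, (g.left i : F) * g.right t = t := fun i t => by
    set z : Fin (2 * ν) := ⟨0, by omega⟩
    set b : Fin (2 * ν) := ⟨2 * i + 1, by omega⟩
    have hzb : z ≠ b := by simp [z, b, Fin.ext_iff]
    set p := mk F _ (single_add_single_ne_zero hzb one_ne_zero t)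
    have h : ratio (g • p).rep z b = ratio p.rep z b := by rw [fixes]
    rw [ratio_rep_smul, ratio_rep_mk, weight_zero, weight_odd] at h
    simpa [ratio, hzb, Ne.symm hzb] using h
  have hleft : ∀ i, g.left i = 1 := fun i => Units.ext (by simpa using key i 1)
  have hright : ∀ t, g.right t = t := fun t => by simpa [hleft] using key ⟨0, hν⟩ t
  exact SemidirectProduct.ext (funext hleft) (RingEquiv.ext hright)

end Action

theorem Efix.exists_toPerm_eq [Finite F] (hν : 1 < ν) {σ : Equiv.Perm (ℙ F (Fin (2 * ν) → F))}
    (hσ : σ ∈ Efix F ν) : ∃ g : SemidirectAut F ν, MulAction.toPerm g = σ := by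
  set a : Fin (2 * ν) := ⟨0, by omega⟩
  have hpa : partner a = ⟨1, by omega⟩ := rfl
  obtain ⟨π, hπ⟩ := Efix.exists_ringHom_ratio_apply hσ (a := a) (c := ⟨2, by omega⟩)
    (by simp [a, Fin.ext_iff]) (by simp [hpa, Fin.ext_iff])
  set κ : Fin (2 * ν) → Fˣ := fun b =>
    Units.mk0 (coordMap σ a b 1) ((Efix.coordMap_eq_zero_iff hσ).not.2 one_ne_zero)
  set g : SemidirectAut F ν :=
    ⟨fun i => κ ⟨2 * i + 1, by omega⟩,
      RingEquiv.ofBijective π (Finite.injective_iff_bijective.1 π.injective)⟩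
  have hw : weight g.left = κ := weight_eq_of_mul_partner (by omega) κ fun j =>
    Units.ext (by simpa [κ, hpa] using Efix.coordMap_one_mul_coordMap_partner hσ a j)
  have hg := toPerm_mem_Efix (by omega) g
  refine ⟨g, Efix.eq_of_forall_rep_ne_zero hg hσ a fun p hp => ?_⟩
  refine eq_of_ratio_eq (a := a) (by rwa [Ne, Efix.rep_apply_eq_zero_iff hg])
    (by rwa [Ne, Efix.rep_apply_eq_zero_iff hσ]) fun b => ?_
  rw [MulAction.toPerm_apply, ratio_rep_smul, hπ p hp, hw]
  simp [κ, coordMap_self, g]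

end SpG

theorem E_iso_semidirectProduct_general (ν : ℕ) (F : Type) [Field F] [Fintype F] (hν : 1 < ν) :
    Nonempty (Efix F ν ≃* (Fin ν → Fˣ) ⋊[phiAct F ν] (RingAut F)) := by
  let Φ := (MulAction.toPermHom (SpG.SemidirectAut F ν) (ℙ F (Fin (2 * ν) → F))).codRestrict
    (Efix F ν) (SpG.toPerm_mem_Efix (by omega))
  have hΦ : Function.Bijective Φ :=
    ⟨fun g h hgh => SpG.toPermHom_injective (by omega) (congrArg Subtype.val hgh),
      fun ⟨σ, hσ⟩ => (SpG.Efix.exists_toPerm_eq hν hσ).imp fun _ hg => Subtype.ext hg⟩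
  exact ⟨(MulEquiv.ofBijective Φ hΦ).symm⟩

/-- For `ν > 1` and `q > 2`, the subgroup `E` of `Aut(Sp(2ν,q))` fixing all the
vertices `[e_i]` and `[f_i]` is isomorphic to the semidirect product
`(F_q^* × ⋯ × F_q^*) ⋊_φ Aut(F_q)` (with `ν` factors `F_q^*`), where `φ` is the
coordinatewise action. -/
theorem E_iso_semidirectProduct (q ν : ℕ) (F : Type) [Field F] [Fintype F]
    (hF : Fintype.card F = q) (hq : 2 < q) (hν : 1 < ν) :
    Nonempty (Efix F ν ≃* (Fin ν → Fˣ) ⋊[phiAct F ν] (RingAut F)) :=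
  E_iso_semidirectProduct_general ν F hν
end
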